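/- arXiv:1407.1822 — 6 statements merged into one kernel-verified Lean document; each statement's English description precedes it below -/
import Mathlib

section
/- Let c < 1 and let f : (c,1) → ℝ be differentiable with derivative bounded on every compact subinterval of (c,1). Then for every ε with 0 < ε < 1 − c and every x with c < x < 1 − ε one has ∫_x^{1−ε} f(t)/((t−c)·√(t−x)) dt = (1/√(x−c)) · ∫_x^{1−ε} (1/√(t−c)) · ( f(1−ε)/√(1−t−ε) − ∫_t^{1−ε} f′(u)/√(u−t) du ) dt. -/
/-!
Put `b = 1 - ε` and `W u = 2 arctan (√(u - x) / √(x - c))` (`arctanWeight c x u`). Then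
`W' t = √(x - c) / ((t - c) √(t - x))` and `∫_x^u dt / (√(t - c) √(u - t)) = W u`.
Integrating by parts against `W` gives `√(x - c) · ∫_x^b f(t) / ((t - c) √(t - x)) dt =
f b · W b - ∫_x^b f' W`. On the other side, the boundary term integrates to `f b · W b`, and
exchanging the order of integration over the triangle `x < t < u ≤ b` turns the double integral
into `∫_x^b f' W`; Fubini applies because `f'` is bounded and `(u - t)^(-1/2)` is integrable on
the square.
-/

open MeasureTheory Set Real

-- For `v < 0` both sides vanish: `√v = 0` and `v ^ (-1/2) = |v| ^ (-1/2) * cos (-π/2) = 0`.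
lemma inv_sqrt_eq_rpow (v : ℝ) : (√v)⁻¹ = v ^ (-(1 / 2) : ℝ) := by
  rcases le_or_gt 0 v with hv | hv
  · rw [rpow_neg hv, ← sqrt_eq_rpow]
  · rw [sqrt_eq_zero_of_nonpos hv.le, rpow_def_of_neg hv,
      show (-(1 / 2) : ℝ) * π = -(π / 2) by ring, cos_neg, cos_pi_div_two]
    simp

lemma intervalIntegrable_inv_sqrt_sub (c a b : ℝ) :
    IntervalIntegrable (fun t => (√(t - c))⁻¹) volume a b := by
  simpa only [inv_sqrt_eq_rpow, sub_add_cancel] using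
    ((intervalIntegral.intervalIntegrable_rpow' (r := -(1 / 2)) (by norm_num)).comp_sub_right c :
      IntervalIntegrable _ volume (a - c + c) (b - c + c))

-- The shear `(t, u) ↦ (t, u - t)` preserves Lebesgue measure and maps the square into a rectangle.
lemma integrable_inv_sqrt_sub_prod (a b : ℝ) :
    Integrable (fun p : ℝ × ℝ => (√(p.2 - p.1))⁻¹)
      ((volume.restrict (Ioc a b)).prod (volume.restrict (Ioc a b))) := by
  have hrect : IntegrableOn (fun q : ℝ × ℝ => (√q.2)⁻¹) (Ioc a b ×ˢ Ioc (a - b) (b - a))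
      (volume.prod volume) := by
    rw [IntegrableOn, ← Measure.prod_restrict]
    have h := (intervalIntegrable_inv_sqrt_sub 0 (a - b) (b - a)).1
    simp only [sub_zero] at h
    exact h.comp_snd (volume.restrict (Ioc a b))
  have hshear := ((measurePreserving_prod_sub volume volume).integrableOn_comp_preimage
    (MeasurableEquiv.shearSubRight ℝ).measurableEmbedding).2 hrect
  rw [Measure.prod_restrict]
  refine hshear.mono_set fun p hp => ⟨hp.1, ?_⟩
  simp only [mem_Ioc]
  constructor <;> linarith [hp.1.1, hp.1.2, hp.2.1, hp.2.2]

noncomputable def arctanWeight (c x t : ℝ) : ℝ := 2 * arctan (√(t - x) / √(x - c))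

section arctanWeight

variable {c x t : ℝ}

lemma continuous_arctanWeight : Continuous (arctanWeight c x) := by
  unfold arctanWeight; fun_prop

@[simp] lemma arctanWeight_self : arctanWeight c x x = 0 := by
  simp [arctanWeight]

lemma hasDerivAt_arctanWeight (hcx : c < x) (hxt : x < t) :
    HasDerivAt (arctanWeight c x) (√(x - c) / ((t - c) * √(t - x))) t := by
  have hd := ((((hasDerivAt_id' t).sub_const x).sqrt (sub_pos.2 hxt).ne').div_const
    (√(x - c))).arctan.const_mul 2
  have hk : 0 < √(x - c) := sqrt_pos.2 (sub_pos.2 hcx)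
  have hs : 0 < √(t - x) := sqrt_pos.2 (sub_pos.2 hxt)
  refine hd.congr_deriv ?_
  have htc : t - c = √(x - c) ^ 2 + √(t - x) ^ 2 := by
    rw [sq_sqrt (sub_pos.2 hcx).le, sq_sqrt (sub_pos.2 hxt).le]; ring
  rw [htc]
  field_simp

lemma continuousOn_arctanWeight_base {u : ℝ} :
    ContinuousOn (fun s => arctanWeight c s u) (Ioi c) := by
  refine ((continuous_arctan.comp_continuousOn (ContinuousOn.div (by fun_prop) (by fun_prop)
    fun s hs => ?_)).const_mul 2)
  exact (sqrt_pos.2 (sub_pos.2 hs)).ne'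

lemma hasDerivAt_neg_arctanWeight_base {u : ℝ} (hct : c < t) (htu : t < u) :
    HasDerivAt (fun s => -arctanWeight c s u) ((√(t - c))⁻¹ * (√(u - t))⁻¹) t := by
  have hc : 0 < √(t - c) := sqrt_pos.2 (sub_pos.2 hct)
  have hu : 0 < √(u - t) := sqrt_pos.2 (sub_pos.2 htu)
  have hd := ((((hasDerivAt_id' t).const_sub u).sqrt (sub_pos.2 htu).ne').div
    (((hasDerivAt_id' t).sub_const c).sqrt (sub_pos.2 hct).ne') hc.ne').arctan.const_mul 2 |>.neg
  refine hd.congr_deriv ?_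
  simp only [Pi.div_apply]
  field_simp
  ring

lemma intervalIntegrable_inv_sqrt_mul_inv_sqrt {u : ℝ} (hcx : c < x) (hxu : x ≤ u) :
    IntervalIntegrable (fun t => (√(t - c))⁻¹ * (√(u - t))⁻¹) volume x u :=
  (intervalIntegrable_iff_integrableOn_Ioc_of_le hxu).2 <|
    intervalIntegral.integrableOn_deriv_of_nonneg
      (continuousOn_arctanWeight_base.neg.mono fun _ ht => hcx.trans_le ht.1)
      (fun t ht => hasDerivAt_neg_arctanWeight_base (hcx.trans ht.1) ht.2)
      fun _ _ => by positivity

lemma integral_inv_sqrt_mul_inv_sqrt {u : ℝ} (hcx : c < x) (hxu : x ≤ u) :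
    ∫ t in x..u, (√(t - c))⁻¹ * (√(u - t))⁻¹ = arctanWeight c x u := by
  rw [intervalIntegral.integral_eq_sub_of_hasDerivAt_of_le hxu
    (continuousOn_arctanWeight_base.neg.mono fun _ ht => hcx.trans_le ht.1)
    (fun t ht => hasDerivAt_neg_arctanWeight_base (hcx.trans ht.1) ht.2)
    (intervalIntegrable_inv_sqrt_mul_inv_sqrt hcx hxu)]
  simp

end arctanWeight

theorem sqrt_mul_integral_div_mul_sqrt {c x b : ℝ} {f f' : ℝ → ℝ} (hcx : c < x) (hxb : x ≤ b)
    (hf : ContinuousOn f (Icc x b)) (hdf : ∀ t ∈ Ioo x b, HasDerivAt f (f' t) t)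
    (hf' : IntervalIntegrable f' volume x b) :
    √(x - c) * ∫ t in x..b, f t / ((t - c) * √(t - x)) =
      f b * arctanWeight c x b - ∫ t in x..b, f' t * arctanWeight c x t := by
  have hW : ∀ t ∈ Ioo x b,
      HasDerivAt (arctanWeight c x) (√(x - c) / ((t - c) * √(t - x))) t :=
    fun t ht => hasDerivAt_arctanWeight hcx ht.1
  have hW' : IntervalIntegrable (fun t => √(x - c) / ((t - c) * √(t - x))) volume x b :=
    (intervalIntegrable_iff_integrableOn_Ioc_of_le hxb).2 <|
      intervalIntegral.integrableOn_deriv_of_nonneg continuous_arctanWeight.continuousOn hW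
        fun t ht => div_nonneg (sqrt_nonneg _) (mul_nonneg (by linarith [ht.1]) (sqrt_nonneg _))
  have ibp := intervalIntegral.integral_mul_deriv_eq_deriv_mul_of_hasDerivAt
    (by rwa [uIcc_of_le hxb]) continuous_arctanWeight.continuousOn (by rwa [min_eq_left hxb, max_eq_right hxb])
    (by rwa [min_eq_left hxb, max_eq_right hxb]) hf' hW'
  rw [arctanWeight_self, mul_zero, sub_zero] at ibp
  rw [← ibp, ← intervalIntegral.integral_const_mul]
  congr 1 with t
  ring

section Triangle

variable {E : Type*} [NormedAddCommGroup E] {a b : ℝ}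

lemma setIntegral_Ioc_indicator_Ioi [NormedSpace ℝ E] {t : ℝ} (ht : t ∈ Icc a b) (g : ℝ → E) :
    ∫ u in Ioc a b, (Ioi t).indicator g u = ∫ u in t..b, g u := by
  rw [setIntegral_indicator measurableSet_Ioi, Ioc_inter_Ioi, max_eq_right ht.1,
    intervalIntegral.integral_of_le ht.2]

lemma setIntegral_Ioc_indicator_Iio [NormedSpace ℝ E] {u : ℝ} (hu : u ∈ Icc a b) (g : ℝ → E) :
    ∫ t in Ioc a b, (Iio u).indicator g t = ∫ t in a..u, g t := by
  have hinter : Ioc a b ∩ Iio u = Ioo a u := by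
    ext t
    simp only [mem_inter_iff, mem_Ioc, mem_Iio, mem_Ioo]
    exact ⟨fun h => ⟨h.1.1, h.2⟩, fun h => ⟨⟨h.1, h.2.le.trans hu.2⟩, h.2⟩⟩
  rw [setIntegral_indicator measurableSet_Iio, hinter, intervalIntegral.integral_of_le hu.1,
    integral_Ioc_eq_integral_Ioo]

lemma MeasureTheory.Integrable.uncurry_indicator_Ioi {F : ℝ → ℝ → E} {μ ν : Measure ℝ}
    (hF : Integrable (Function.uncurry F) (μ.prod ν)) :
    Integrable (Function.uncurry fun t u => (Ioi t).indicator (F t) u) (μ.prod ν) := by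
  have h : (Function.uncurry fun t u => (Ioi t).indicator (F t) u) =
      {p : ℝ × ℝ | p.1 < p.2}.indicator (Function.uncurry F) := by
    ext ⟨t, u⟩
    simp [indicator_apply]
  exact h ▸ hF.indicator (measurableSet_lt measurable_fst measurable_snd)

variable [NormedSpace ℝ E] {F : ℝ → ℝ → E}

theorem intervalIntegrable_integral_triangle (hab : a ≤ b)
    (hF : Integrable (Function.uncurry F)
      ((volume.restrict (Ioc a b)).prod (volume.restrict (Ioc a b)))) :
    IntervalIntegrable (fun t => ∫ u in t..b, F t u) volume a b := by
  rw [intervalIntegrable_iff_integrableOn_Ioc_of_le hab]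
  refine hF.uncurry_indicator_Ioi.integral_prod_left.congr ?_
  filter_upwards [ae_restrict_mem measurableSet_Ioc] with t ht
  exact setIntegral_Ioc_indicator_Ioi (Ioc_subset_Icc_self ht) (F t)

theorem integral_integral_swap_triangle [CompleteSpace E] (hab : a ≤ b)
    (hF : Integrable (Function.uncurry F)
      ((volume.restrict (Ioc a b)).prod (volume.restrict (Ioc a b)))) :
    ∫ t in a..b, ∫ u in t..b, F t u = ∫ u in a..b, ∫ t in a..u, F t u := by
  have hsection : ∀ t u, (Ioi t).indicator (F t) u = (Iio u).indicator (fun t => F t u) t :=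
    fun t u => by simp [indicator_apply]
  rw [intervalIntegral.integral_of_le hab, intervalIntegral.integral_of_le hab]
  calc ∫ t in Ioc a b, ∫ u in t..b, F t u
      = ∫ t in Ioc a b, ∫ u in Ioc a b, (Ioi t).indicator (F t) u :=
        setIntegral_congr_fun measurableSet_Ioc fun t ht =>
          (setIntegral_Ioc_indicator_Ioi (Ioc_subset_Icc_self ht) (F t)).symm
    _ = ∫ u in Ioc a b, ∫ t in Ioc a b, (Iio u).indicator (fun t => F t u) t := by
        simp only [← hsection]
        exact integral_integral_swap hF.uncurry_indicator_Ioi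
    _ = ∫ u in Ioc a b, ∫ t in a..u, F t u :=
        setIntegral_congr_fun measurableSet_Ioc fun u hu =>
          setIntegral_Ioc_indicator_Iio (Ioc_subset_Icc_self hu) _

end Triangle

section Kernel

variable {c x b M : ℝ} {g : ℝ → ℝ}

lemma integrable_inv_sqrt_mul_div_sqrt (hcx : c < x)
    (hg : AEStronglyMeasurable g (volume.restrict (Ioc x b))) (hM : ∀ u ∈ Ioc x b, |g u| ≤ M) :
    Integrable (Function.uncurry fun t u => (√(t - c))⁻¹ * (g u / √(u - t)))
      ((volume.restrict (Ioc x b)).prod (volume.restrict (Ioc x b))) := by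
  refine ((integrable_inv_sqrt_sub_prod x b).const_mul ((√(x - c))⁻¹ * M)).mono' ?_ ?_
  · exact (by fun_prop : Measurable fun p : ℝ × ℝ => (√(p.1 - c))⁻¹).aestronglyMeasurable.mul
      (hg.comp_snd.div₀
        (by fun_prop : Measurable fun p : ℝ × ℝ => √(p.2 - p.1)).aestronglyMeasurable)
  · rw [Measure.prod_restrict]
    filter_upwards [ae_restrict_mem (measurableSet_Ioc.prod measurableSet_Ioc)]
      with ⟨t, u⟩ ⟨ht, hu⟩
    have hsqrt : (√(t - c))⁻¹ ≤ (√(x - c))⁻¹ :=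
      inv_anti₀ (sqrt_pos.2 (sub_pos.2 hcx)) (sqrt_le_sqrt (by linarith [ht.1]))
    calc ‖(√(t - c))⁻¹ * (g u / √(u - t))‖ = (√(t - c))⁻¹ * |g u| * (√(u - t))⁻¹ := by
          simp [div_eq_mul_inv, mul_assoc, abs_of_nonneg (sqrt_nonneg (t - c)),
            abs_of_nonneg (sqrt_nonneg (u - t))]
      _ ≤ (√(x - c))⁻¹ * M * (√(u - t))⁻¹ := by gcongr; exact hM u hu

theorem integral_inv_sqrt_mul_integral_div_sqrt (hcx : c < x) (hxb : x ≤ b)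
    (hg : AEStronglyMeasurable g (volume.restrict (Ioc x b))) (hM : ∀ u ∈ Ioc x b, |g u| ≤ M) :
    ∫ t in x..b, (√(t - c))⁻¹ * ∫ u in t..b, g u / √(u - t) =
      ∫ u in x..b, g u * arctanWeight c x u := by
  calc ∫ t in x..b, (√(t - c))⁻¹ * ∫ u in t..b, g u / √(u - t)
      = ∫ t in x..b, ∫ u in t..b, (√(t - c))⁻¹ * (g u / √(u - t)) := by
        simp only [intervalIntegral.integral_const_mul]
    _ = ∫ u in x..b, ∫ t in x..u, (√(t - c))⁻¹ * (g u / √(u - t)) :=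
        integral_integral_swap_triangle hxb (integrable_inv_sqrt_mul_div_sqrt hcx hg hM)
    _ = ∫ u in x..b, g u * arctanWeight c x u := by
        refine intervalIntegral.integral_congr fun u hu => ?_
        rw [uIcc_of_le hxb] at hu
        rw [← integral_inv_sqrt_mul_inv_sqrt hcx hu.1, ← intervalIntegral.integral_const_mul]
        congr 1 with t
        ring

theorem intervalIntegrable_inv_sqrt_mul_integral_div_sqrt (hcx : c < x) (hxb : x ≤ b)
    (hg : AEStronglyMeasurable g (volume.restrict (Ioc x b))) (hM : ∀ u ∈ Ioc x b, |g u| ≤ M) :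
    IntervalIntegrable (fun t => (√(t - c))⁻¹ * ∫ u in t..b, g u / √(u - t)) volume x b := by
  simpa only [intervalIntegral.integral_const_mul] using
    intervalIntegrable_integral_triangle hxb (integrable_inv_sqrt_mul_div_sqrt hcx hg hM)

end Kernel

theorem stmt_0_general (c : ℝ) (f : ℝ → ℝ)
    (hdiff : ∀ t ∈ Set.Ioo c 1, DifferentiableAt ℝ f t)
    (hbdd : ∀ p q : ℝ, c < p → q < 1 →
      ∃ M : ℝ, ∀ t ∈ Set.Icc p q, |deriv f t| ≤ M)
    (ε : ℝ) (hε0 : 0 < ε)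
    (x : ℝ) (hxc : c < x) (hx1 : x < 1 - ε) :
    (∫ t in x..(1 - ε), f t / ((t - c) * Real.sqrt (t - x))) =
      (Real.sqrt (x - c))⁻¹ *
        ∫ t in x..(1 - ε), (Real.sqrt (t - c))⁻¹ *
          (f (1 - ε) / Real.sqrt (1 - t - ε)
            - ∫ u in t..(1 - ε), deriv f u / Real.sqrt (u - t)) := by
  have hxb : x ≤ 1 - ε := hx1.le
  obtain ⟨M, hM⟩ := hbdd x (1 - ε) hxc (by linarith)
  have hM' : ∀ u ∈ Ioc x (1 - ε), |deriv f u| ≤ M := fun u hu => hM u (Ioc_subset_Icc_self hu)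
  have hmeas : AEStronglyMeasurable (deriv f) (volume.restrict (Ioc x (1 - ε))) :=
    (measurable_deriv f).aestronglyMeasurable
  have hdf : ∀ t ∈ Icc x (1 - ε), HasDerivAt f (deriv f t) t := fun t ht =>
    (hdiff t ⟨hxc.trans_le ht.1, by linarith [ht.2]⟩).hasDerivAt
  have hf' : IntervalIntegrable (deriv f) volume x (1 - ε) :=
    (intervalIntegrable_iff_integrableOn_Ioc_of_le hxb).2 <|
      Measure.integrableOn_of_bounded measure_Ioc_lt_top.ne
        (measurable_deriv f).aestronglyMeasurable
        (ae_restrict_of_forall_mem measurableSet_Ioc hM')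
  have hibp := sqrt_mul_integral_div_mul_sqrt hxc hxb
    (fun t ht => (hdf t ht).continuousAt.continuousWithinAt)
    (fun t ht => hdf t (Ioo_subset_Icc_self ht)) hf'
  have hboundary : ∀ t, (√(t - c))⁻¹ * (f (1 - ε) / √(1 - t - ε)) =
      f (1 - ε) * ((√(t - c))⁻¹ * (√(1 - ε - t))⁻¹) := fun t => by
    rw [show 1 - t - ε = 1 - ε - t by ring]; ring
  have hboundary_int : IntervalIntegrable
      (fun t => (√(t - c))⁻¹ * (f (1 - ε) / √(1 - t - ε))) volume x (1 - ε) := by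
    simpa only [hboundary] using
      (intervalIntegrable_inv_sqrt_mul_inv_sqrt hxc hxb).const_mul (f (1 - ε))
  simp only [mul_sub]
  rw [intervalIntegral.integral_sub hboundary_int
      (intervalIntegrable_inv_sqrt_mul_integral_div_sqrt hxc hxb hmeas hM'),
    integral_inv_sqrt_mul_integral_div_sqrt hxc hxb hmeas hM']
  simp only [hboundary, intervalIntegral.integral_const_mul, integral_inv_sqrt_mul_inv_sqrt hxc hxb]
  rw [← hibp, inv_mul_cancel_left₀ (sqrt_pos.2 (sub_pos.2 hxc)).ne']

/-- Lemma 4.1 (Convolution1a) of Ablinger–Blümlein–Raab–Schneider: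
for `c < 1`, `f` differentiable on `(c,1)` with derivative bounded on every
compact subinterval, `0 < ε < 1 - c` and `c < x < 1 - ε`,
`∫_x^{1-ε} f(t)/((t-c)·√(t-x)) dt
  = (1/√(x-c)) ∫_x^{1-ε} (1/√(t-c)) (f(1-ε)/√(1-t-ε) - ∫_t^{1-ε} f'(u)/√(u-t) du) dt`. -/
theorem stmt_0 (c : ℝ) (hc : c < 1) (f : ℝ → ℝ)
    (hdiff : ∀ t ∈ Set.Ioo c 1, DifferentiableAt ℝ f t)
    (hbdd : ∀ p q : ℝ, c < p → q < 1 →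
      ∃ M : ℝ, ∀ t ∈ Set.Icc p q, |deriv f t| ≤ M)
    (ε : ℝ) (hε0 : 0 < ε) (hε1 : ε < 1 - c)
    (x : ℝ) (hxc : c < x) (hx1 : x < 1 - ε) :
    (∫ t in x..(1 - ε), f t / ((t - c) * Real.sqrt (t - x))) =
      (Real.sqrt (x - c))⁻¹ *
        ∫ t in x..(1 - ε), (Real.sqrt (t - c))⁻¹ *
          (f (1 - ε) / Real.sqrt (1 - t - ε)
            - ∫ u in t..(1 - ε), deriv f u / Real.sqrt (u - t)) :=
  stmt_0_general c f hdiff hbdd ε hε0 x hxc hx1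
end

section
/- Let a < 0 and let f : (a,1) → ℝ be differentiable with derivative bounded on every compact subinterval of (a,1). Then for every ε > 0 and every x with a < x < 1 − ε one has ∫_x^{1−ε} f(t)/√((t−a)(t−x)) dt = ∫_x^{1−ε} (1/(t−a)) · ( √(1−a−ε)·f(1−ε)/√(1−t−ε) − ∫_t^{1−ε} √(u−a)·f′(u)/√(u−t) du ) dt. -/
/-!
Put `b = 1 - ε` and `L(x, u) = 2 log (√(u - a) + √(u - x)) - log (x - a)`. This `L` is a primitive
of both kernels at once: `∂ᵤ L(x, u) = 1 / √((u - a)(u - x))`,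
`∂ₓ L(x, u) = -√(u - a) / ((x - a)√(u - x))` and `L(u, u) = 0`. Writing `f t = f b - ∫_t^b f'`
on the left and swapping the order of integration over the triangle `x < t < u ≤ b` on both
sides, each side becomes `f b * L(x, b) - ∫_x^b L(x, u) f'(u) du`. The kernels are nonnegative,
so their integrability, and by Tonelli that of the triangle integrands, comes out of the
fundamental theorem of calculus.
-/

open MeasureTheory Set Real Function

lemma intervalIntegrable_and_integral_eq_sub_of_deriv_nonneg {G G' : ℝ → ℝ} {x u : ℝ}
    (hxu : x ≤ u) (hcont : ContinuousOn G (Icc x u))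
    (hderiv : ∀ t ∈ Ioo x u, HasDerivAt G (G' t) t) (hpos : ∀ t ∈ Ioo x u, 0 ≤ G' t) :
    IntervalIntegrable G' volume x u ∧ ∫ t in x..u, G' t = G u - G x := by
  have hint : IntervalIntegrable G' volume x u :=
    (intervalIntegrable_iff_integrableOn_Ioc_of_le hxu).2
      (intervalIntegral.integrableOn_deriv_of_nonneg hcont hderiv hpos)
  exact ⟨hint, intervalIntegral.integral_eq_sub_of_hasDerivAt_of_le hxu hcont hderiv hint⟩

lemma integral_deriv_eq_sub_of_abs_le {f : ℝ → ℝ} {t b M : ℝ} (htb : t ≤ b)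
    (hdiff : ∀ u ∈ Icc t b, DifferentiableAt ℝ f u) (hM : ∀ u ∈ Icc t b, |deriv f u| ≤ M) :
    ∫ u in t..b, deriv f u = f b - f t := by
  rw [← uIcc_of_le htb] at hdiff hM
  refine intervalIntegral.integral_eq_sub_of_hasDerivAt (fun u hu => (hdiff u hu).hasDerivAt) ?_
  exact (intervalIntegrable_const (c := M)).mono_fun' (measurable_deriv f).aestronglyMeasurable <|
    (ae_restrict_mem measurableSet_uIoc).mono fun u hu => hM u (uIoc_subset_uIcc hu)

section Triangle

variable {x b : ℝ}

lemma ite_lt_eq_indicator_Ioi (h : ℝ → ℝ) (t : ℝ) :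
    (fun u => if t < u then h u else 0) = (Ioi t).indicator h := by
  ext u; simp [indicator_apply]

lemma ite_lt_eq_indicator_Iio (h : ℝ → ℝ) (u : ℝ) :
    (fun t => if t < u then h t else 0) = (Iio u).indicator h := by
  ext t; simp [indicator_apply]

lemma setIntegral_Ioc_ite_lt_left (h : ℝ → ℝ) {t : ℝ} (hxt : x ≤ t) (htb : t ≤ b) :
    ∫ u in Ioc x b, (if t < u then h u else 0) = ∫ u in t..b, h u := by
  rw [intervalIntegral.integral_of_le htb, ite_lt_eq_indicator_Ioi,
    setIntegral_indicator measurableSet_Ioi, Ioc_inter_Ioi, max_eq_right hxt]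

lemma Ioc_inter_Iio_of_le {u : ℝ} (hub : u ≤ b) : Ioc x b ∩ Iio u = Ioo x u := by
  ext t; simp only [mem_inter_iff, mem_Ioc, mem_Iio, mem_Ioo]
  constructor
  · rintro ⟨⟨hxt, -⟩, htu⟩; exact ⟨hxt, htu⟩
  · rintro ⟨hxt, htu⟩; exact ⟨⟨hxt, htu.le.trans hub⟩, htu⟩

lemma setIntegral_Ioc_ite_lt_right (h : ℝ → ℝ) {u : ℝ} (hub : u ≤ b) :
    ∫ t in Ioc x b, (if t < u then h t else 0) = ∫ t in Ioo x u, h t := by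
  rw [ite_lt_eq_indicator_Iio, setIntegral_indicator measurableSet_Iio, Ioc_inter_Iio_of_le hub]

lemma integrableOn_Ioc_ite_lt_right {h : ℝ → ℝ} {u : ℝ} (hub : u ≤ b)
    (hh : IntegrableOn h (Ioo x u)) :
    IntegrableOn (fun t => if t < u then h t else 0) (Ioc x b) := by
  rw [ite_lt_eq_indicator_Iio, IntegrableOn, integrable_indicator_iff measurableSet_Iio,
    IntegrableOn, Measure.restrict_restrict measurableSet_Iio, inter_comm, Ioc_inter_Iio_of_le hub]
  exact hh

structure IsTriangleKernel (x b : ℝ) (k : ℝ → ℝ → ℝ) (Φ : ℝ → ℝ) : Prop where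
  measurable : Measurable (uncurry k)
  nonneg : ∀ t u, x < t → t < u → 0 ≤ k t u
  intervalIntegrable : ∀ u ∈ Ioc x b, IntervalIntegrable (fun t => k t u) volume x u
  integral_eq : ∀ u ∈ Ioc x b, ∫ t in x..u, k t u = Φ u
  intervalIntegrable_primitive : IntervalIntegrable Φ volume x b

variable {k : ℝ → ℝ → ℝ} {Φ g : ℝ → ℝ} {M : ℝ}

lemma IsTriangleKernel.integrable_ite_mul (hk : IsTriangleKernel x b k Φ) (hg_meas : Measurable g)
    (hg : ∀ u ∈ Ioc x b, |g u| ≤ M) :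
    Integrable (fun p : ℝ × ℝ => if p.1 < p.2 then k p.1 p.2 * g p.2 else 0)
      ((volume.restrict (Ioc x b)).prod (volume.restrict (Ioc x b))) := by
  have hmeas : Measurable (fun p : ℝ × ℝ => if p.1 < p.2 then k p.1 p.2 * g p.2 else 0) :=
    Measurable.ite (measurableSet_lt measurable_fst measurable_snd)
      (hk.measurable.mul (hg_meas.comp measurable_snd)) measurable_const
  have hslice : ∀ u ∈ Ioc x b, IntegrableOn (fun t => k t u * g u) (Ioo x u) := fun u hu =>
    ((hk.intervalIntegrable u hu).mul_const (g u)).1.mono_set Ioo_subset_Ioc_self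
  have hnorm : ∀ u ∈ Ioc x b,
      ∫ t in Ioc x b, ‖if t < u then k t u * g u else 0‖ = Φ u * |g u| := by
    intro u hu
    simp only [apply_ite norm, norm_zero]
    rw [setIntegral_Ioc_ite_lt_right _ hu.2, ← hk.integral_eq u hu,
      intervalIntegral.integral_of_le hu.1.le, integral_Ioc_eq_integral_Ioo, ← integral_mul_const]
    refine setIntegral_congr_fun measurableSet_Ioo fun t ht => ?_
    rw [norm_mul, norm_of_nonneg (hk.nonneg t u ht.1 ht.2), norm_eq_abs]
  refine (integrable_prod_iff' hmeas.aestronglyMeasurable).2 ⟨?_, ?_⟩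
  · filter_upwards [ae_restrict_mem measurableSet_Ioc] with u hu
    exact integrableOn_Ioc_ite_lt_right hu.2 (hslice u hu)
  · refine Integrable.congr ?_
      ((ae_restrict_mem measurableSet_Ioc).mono fun u hu => (hnorm u hu).symm)
    refine (hk.intervalIntegrable_primitive.1).mul_bdd (c := M) hg_meas.abs.aestronglyMeasurable ?_
    filter_upwards [ae_restrict_mem measurableSet_Ioc] with u hu
    simpa using hg u hu

lemma IsTriangleKernel.intervalIntegrable_integral_mul (hk : IsTriangleKernel x b k Φ)
    (hxb : x ≤ b) (hg_meas : Measurable g) (hg : ∀ u ∈ Ioc x b, |g u| ≤ M) :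
    IntervalIntegrable (fun t => ∫ u in t..b, k t u * g u) volume x b := by
  refine (intervalIntegrable_iff_integrableOn_Ioc_of_le hxb).2 <|
    (hk.integrable_ite_mul hg_meas hg).integral_prod_left.congr ?_
  filter_upwards [ae_restrict_mem measurableSet_Ioc] with t ht
  exact setIntegral_Ioc_ite_lt_left _ ht.1.le ht.2

lemma IsTriangleKernel.integral_integral_mul_swap (hk : IsTriangleKernel x b k Φ)
    (hxb : x ≤ b) (hg_meas : Measurable g) (hg : ∀ u ∈ Ioc x b, |g u| ≤ M) :
    ∫ t in x..b, ∫ u in t..b, k t u * g u = ∫ u in x..b, Φ u * g u := by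
  rw [intervalIntegral.integral_of_le hxb, intervalIntegral.integral_of_le hxb]
  calc ∫ t in Ioc x b, ∫ u in t..b, k t u * g u
      = ∫ t in Ioc x b, ∫ u in Ioc x b, (if t < u then k t u * g u else 0) :=
        setIntegral_congr_fun measurableSet_Ioc fun t ht =>
          (setIntegral_Ioc_ite_lt_left _ ht.1.le ht.2).symm
    _ = ∫ u in Ioc x b, ∫ t in Ioc x b, (if t < u then k t u * g u else 0) :=
        integral_integral_swap (hk.integrable_ite_mul hg_meas hg)
    _ = ∫ u in Ioc x b, Φ u * g u := by
        refine setIntegral_congr_fun measurableSet_Ioc fun u hu => ?_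
        rw [setIntegral_Ioc_ite_lt_right _ hu.2, ← integral_Ioc_eq_integral_Ioo,
          ← intervalIntegral.integral_of_le hu.1.le, intervalIntegral.integral_mul_const,
          hk.integral_eq u hu]

lemma IsTriangleKernel.integral_const_mul_sub_integral_mul (hk : IsTriangleKernel x b k Φ)
    (hxb : x < b) (hg_meas : Measurable g) (hg : ∀ u ∈ Ioc x b, |g u| ≤ M) (c : ℝ) :
    ∫ t in x..b, (c * k t b - ∫ u in t..b, k t u * g u) = c * Φ b - ∫ u in x..b, Φ u * g u := by
  have hb : b ∈ Ioc x b := ⟨hxb, le_rfl⟩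
  rw [intervalIntegral.integral_sub ((hk.intervalIntegrable b hb).const_mul c)
      (hk.intervalIntegrable_integral_mul hxb.le hg_meas hg),
    intervalIntegral.integral_const_mul, hk.integral_eq b hb,
    hk.integral_integral_mul_swap hxb.le hg_meas hg]

end Triangle

noncomputable def kernelPrimitive (a x u : ℝ) : ℝ :=
  2 * log (√(u - a) + √(u - x)) - log (x - a)

lemma kernelPrimitive_self {a x : ℝ} (hax : a < x) : kernelPrimitive a x x = 0 := by
  rw [kernelPrimitive, sub_self, sqrt_zero, add_zero, log_sqrt (by linarith)]
  ring

lemma continuousOn_kernelPrimitive_right {a x : ℝ} (hax : a < x) :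
    ContinuousOn (kernelPrimitive a x) (Ici x) := by
  have hpos : ∀ u ∈ Ici x, √(u - a) + √(u - x) ≠ 0 := fun u hu =>
    (add_pos_of_pos_of_nonneg (sqrt_pos.2 (by linarith [mem_Ici.1 hu])) (sqrt_nonneg _)).ne'
  unfold kernelPrimitive
  fun_prop (disch := exact hpos)

lemma continuousOn_kernelPrimitive_left {a x u : ℝ} (hax : a < x) :
    ContinuousOn (fun t => kernelPrimitive a t u) (Icc x u) := by
  have hpos : ∀ t ∈ Icc x u, √(u - a) + √(u - t) ≠ 0 := fun t ht =>
    (add_pos_of_pos_of_nonneg (sqrt_pos.2 (by linarith [ht.1, ht.2])) (sqrt_nonneg _)).ne'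
  have hta : ∀ t ∈ Icc x u, t - a ≠ 0 := fun t ht => by linarith [ht.1]
  unfold kernelPrimitive
  fun_prop (disch := assumption)

lemma intervalIntegrable_kernelPrimitive {a x b : ℝ} (hax : a < x) (hxb : x ≤ b) :
    IntervalIntegrable (kernelPrimitive a x) volume x b :=
  ((continuousOn_kernelPrimitive_right hax).mono Icc_subset_Ici_self).intervalIntegrable_of_Icc hxb

lemma hasDerivAt_kernelPrimitive_right {a x u : ℝ} (hax : a < x) (hxu : x < u) :
    HasDerivAt (kernelPrimitive a x) (√((u - a) * (u - x)))⁻¹ u := by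
  have hua : 0 < √(u - a) := sqrt_pos.2 (by linarith)
  have hux : 0 < √(u - x) := sqrt_pos.2 (by linarith)
  have hsum := (((hasDerivAt_id' u).sub_const a).sqrt (by linarith)).fun_add
    (((hasDerivAt_id' u).sub_const x).sqrt (by linarith))
  refine (((hsum.log (by positivity)).const_mul 2).sub_const (log (x - a))).congr_deriv ?_
  rw [sqrt_mul (by linarith : 0 ≤ u - a)]
  field_simp
  ring

lemma hasDerivAt_kernelPrimitive_left {a t u : ℝ} (hat : a < t) (htu : t < u) :
    HasDerivAt (fun t => kernelPrimitive a t u) (-(√(u - a) / ((t - a) * √(u - t)))) t := by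
  have hua : 0 < √(u - a) := sqrt_pos.2 (by linarith)
  have hut : 0 < √(u - t) := sqrt_pos.2 (by linarith)
  have hsq : √(u - a) ^ 2 - √(u - t) ^ 2 = t - a := by
    rw [sq_sqrt (by linarith), sq_sqrt (by linarith)]; ring
  have hs := (((hasDerivAt_id' t).const_sub u).sqrt (by linarith)).const_add (√(u - a))
  refine (((hs.log (by positivity)).const_mul 2).sub
    (((hasDerivAt_id' t).sub_const a).log (by linarith))).congr_deriv ?_
  have hta : t - a ≠ 0 := by linarith
  field_simp
  linear_combination hsq

lemma isTriangleKernel_inv_sqrt_mul {a x b : ℝ} (hax : a < x) (hxb : x ≤ b) :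
    IsTriangleKernel x b (fun t _ => (√((t - a) * (t - x)))⁻¹) (kernelPrimitive a x) := by
  have hint : ∀ u ∈ Ioc x b, IntervalIntegrable (fun t => (√((t - a) * (t - x)))⁻¹) volume x u ∧
      ∫ t in x..u, (√((t - a) * (t - x)))⁻¹ = kernelPrimitive a x u := fun u hu => by
    simpa [kernelPrimitive_self hax] using intervalIntegrable_and_integral_eq_sub_of_deriv_nonneg
      hu.1.le ((continuousOn_kernelPrimitive_right hax).mono Icc_subset_Ici_self)
      (fun t ht => hasDerivAt_kernelPrimitive_right hax ht.1) (fun t _ => by positivity)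
  exact
    { measurable := by unfold uncurry; fun_prop
      nonneg := fun t u _ _ => by positivity
      intervalIntegrable := fun u hu => (hint u hu).1
      integral_eq := fun u hu => (hint u hu).2
      intervalIntegrable_primitive := intervalIntegrable_kernelPrimitive hax hxb }

lemma isTriangleKernel_sqrt_div {a x b : ℝ} (hax : a < x) (hxb : x ≤ b) :
    IsTriangleKernel x b (fun t u => √(u - a) / ((t - a) * √(u - t))) (kernelPrimitive a x) := by
  have hint : ∀ u ∈ Ioc x b,
      IntervalIntegrable (fun t => √(u - a) / ((t - a) * √(u - t))) volume x u ∧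
      ∫ t in x..u, √(u - a) / ((t - a) * √(u - t)) = kernelPrimitive a x u := fun u hu => by
    simpa [kernelPrimitive_self (hax.trans hu.1)] using
      intervalIntegrable_and_integral_eq_sub_of_deriv_nonneg (G := fun t => -kernelPrimitive a t u)
      hu.1.le (continuousOn_kernelPrimitive_left hax).neg
      (fun t ht =>
        (hasDerivAt_kernelPrimitive_left (hax.trans ht.1) ht.2).fun_neg.congr_deriv (neg_neg _))
      (fun t ht => div_nonneg (sqrt_nonneg _) (mul_nonneg (by linarith [ht.1]) (sqrt_nonneg _)))
  exact
    { measurable := by unfold uncurry; fun_prop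
      nonneg := fun t u hxt _ =>
        div_nonneg (sqrt_nonneg _) (mul_nonneg (by linarith) (sqrt_nonneg _))
      intervalIntegrable := fun u hu => (hint u hu).1
      integral_eq := fun u hu => (hint u hu).2
      intervalIntegrable_primitive := intervalIntegrable_kernelPrimitive hax hxb }

theorem stmt_1_general (a : ℝ) (f : ℝ → ℝ)
    (hdiff : ∀ t ∈ Set.Ioo a 1, DifferentiableAt ℝ f t)
    (hbdd : ∀ p q : ℝ, a < p → q < 1 →
      ∃ M : ℝ, ∀ t ∈ Set.Icc p q, |deriv f t| ≤ M)
    (ε : ℝ) (hε0 : 0 < ε)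
    (x : ℝ) (hxa : a < x) (hx1 : x < 1 - ε) :
    (∫ t in x..(1 - ε), f t / Real.sqrt ((t - a) * (t - x))) =
      ∫ t in x..(1 - ε), (t - a)⁻¹ *
        (Real.sqrt (1 - a - ε) * f (1 - ε) / Real.sqrt (1 - t - ε)
          - ∫ u in t..(1 - ε), Real.sqrt (u - a) * deriv f u / Real.sqrt (u - t)) := by
  set b := 1 - ε
  have hxb : x < b := hx1
  obtain ⟨M, hM⟩ := hbdd x b hxa (by linarith)
  have hg : ∀ u ∈ Ioc x b, |deriv f u| ≤ M := fun u hu => hM u (Ioc_subset_Icc_self hu)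
  have hftc : ∀ t ∈ uIcc x b, f t = f b - ∫ u in t..b, deriv f u := by
    intro t ht
    rw [uIcc_of_le hxb.le] at ht
    have hsub : Icc t b ⊆ Icc x b := Icc_subset_Icc_left ht.1
    rw [integral_deriv_eq_sub_of_abs_le ht.2
      (fun u hu => hdiff u ⟨hxa.trans_le (hsub hu).1, (hsub hu).2.trans_lt (by linarith)⟩)
      (fun u hu => hM u (hsub hu))]
    ring
  calc (∫ t in x..b, f t / √((t - a) * (t - x)))
      = ∫ t in x..b, (f b * (√((t - a) * (t - x)))⁻¹
          - ∫ u in t..b, (√((t - a) * (t - x)))⁻¹ * deriv f u) :=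
        intervalIntegral.integral_congr fun t ht => by
          rw [hftc t ht, intervalIntegral.integral_const_mul]; ring
    _ = f b * kernelPrimitive a x b - ∫ u in x..b, kernelPrimitive a x u * deriv f u :=
        (isTriangleKernel_inv_sqrt_mul hxa hxb.le).integral_const_mul_sub_integral_mul hxb
          (measurable_deriv f) hg _
    _ = ∫ t in x..b, (f b * (√(b - a) / ((t - a) * √(b - t)))
          - ∫ u in t..b, √(u - a) / ((t - a) * √(u - t)) * deriv f u) :=
        ((isTriangleKernel_sqrt_div hxa hxb.le).integral_const_mul_sub_integral_mul hxb
          (measurable_deriv f) hg _).symm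
    _ = _ := intervalIntegral.integral_congr fun t _ => by
        rw [show 1 - a - ε = b - a by ring, show 1 - t - ε = b - t by ring, mul_sub,
          ← intervalIntegral.integral_const_mul]
        congr 1
        · rw [div_eq_mul_inv, mul_inv]; ring
        · congr 1; ext u; rw [div_eq_mul_inv, mul_inv]; ring

/-- Lemma 4.2 (Convolution1b): for `a < 0`, `f` differentiable on `(a,1)` with
locally bounded derivative, `ε > 0` and `a < x < 1 - ε`,
`∫_x^{1-ε} f(t)/√((t-a)(t-x)) dt
  = ∫_x^{1-ε} (1/(t-a)) (√(1-a-ε)·f(1-ε)/√(1-t-ε) - ∫_t^{1-ε} √(u-a)·f'(u)/√(u-t) du) dt`. -/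
theorem stmt_1 (a : ℝ) (ha : a < 0) (f : ℝ → ℝ)
    (hdiff : ∀ t ∈ Set.Ioo a 1, DifferentiableAt ℝ f t)
    (hbdd : ∀ p q : ℝ, a < p → q < 1 →
      ∃ M : ℝ, ∀ t ∈ Set.Icc p q, |deriv f t| ≤ M)
    (ε : ℝ) (hε0 : 0 < ε)
    (x : ℝ) (hxa : a < x) (hx1 : x < 1 - ε) :
    (∫ t in x..(1 - ε), f t / Real.sqrt ((t - a) * (t - x))) =
      ∫ t in x..(1 - ε), (t - a)⁻¹ *
        (Real.sqrt (1 - a - ε) * f (1 - ε) / Real.sqrt (1 - t - ε)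
          - ∫ u in t..(1 - ε), Real.sqrt (u - a) * deriv f u / Real.sqrt (u - t)) :=
  stmt_1_general a f hdiff hbdd ε hε0 x hxa hx1
end

section
/- Let a < 0, c < 0, and let f : (a,1) → ℝ be differentiable with derivative bounded on every compact subinterval of (a,1). Then for every ε > 0 and every x with max(a,c) < x < 1 − ε one has ∫_x^{1−ε} f(t)/((t−c)·√((t−a)(t−x))) dt = (1/√(x−c)) · ∫_x^{1−ε} (1/((t−a)·√(t−c))) · ( √(1−a−ε)·f(1−ε)/√(1−t−ε) − ∫_t^{1−ε} √(u−a)·f′(u)/√(u−t) du ) dt. -/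
open Set MeasureTheory

/-!
Put `b = 1 - ε`, `W(u) = ∫_x^u dt / ((t - c)√((t - a)(t - x)))` and
`J(u) = ∫_x^u dt / ((t - a)√(t - c)√(u - t))`. Writing `f(t) = f(b) - ∫_t^b f'` and exchanging the
order of integration over the triangle `x < t < u < b` turns the left side into
`f(b) W(b) - ∫_x^b f'(u) W(u) du`, and the integral on the right into
`√(b - a) f(b) J(b) - ∫_x^b √(u - a) f'(u) J(u) du`; the singularities are of type `1/√`, so
Fubini applies. Both sides then agree by the kernel identity
`√(u - a) J(u) = √(x - c) W(u)`: the Möbius involutions of `(x, u)` with poles `a` and `c`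
transform `W(u)` and `J(u)` into integrals that differ by the reflection `t ↦ x + u - t`.
-/

/-- The Möbius involution of `(x, u)` with pole `α`; it exchanges `x` and `u`. -/
noncomputable def mobiusInvolution (α x u t : ℝ) : ℝ := x + (x - α) * (u - t) / (t - α)

section Mobius

variable {α x u t : ℝ}

lemma mobiusInvolution_sub_left : mobiusInvolution α x u t - x = (x - α) * (u - t) / (t - α) :=
  add_sub_cancel_left _ _

lemma mobiusInvolution_sub_pole (ht : t ≠ α) :
    mobiusInvolution α x u t - α = (x - α) * (u - α) / (t - α) := by
  unfold mobiusInvolution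
  field_simp [sub_ne_zero.mpr ht]
  ring

lemma sub_mobiusInvolution (ht : t ≠ α) :
    u - mobiusInvolution α x u t = (t - x) * (u - α) / (t - α) := by
  unfold mobiusInvolution
  field_simp [sub_ne_zero.mpr ht]
  ring

lemma mapsTo_mobiusInvolution (hα : α < x) :
    MapsTo (mobiusInvolution α x u) (Ioo x u) (Ioo x u) := by
  rintro t ⟨hxt, htu⟩
  have htα : 0 < t - α := by linarith
  constructor
  · rw [← sub_pos, mobiusInvolution_sub_left]
    exact div_pos (mul_pos (by linarith) (by linarith)) htα
  · rw [← sub_pos, sub_mobiusInvolution (by linarith)]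
    exact div_pos (mul_pos (by linarith) (by linarith)) htα

lemma invOn_mobiusInvolution (hα : α < x) :
    InvOn (mobiusInvolution α x u) (mobiusInvolution α x u) (Ioo x u) (Ioo x u) := by
  suffices h : LeftInvOn (mobiusInvolution α x u) (mobiusInvolution α x u) (Ioo x u) from
    ⟨h, h⟩
  intro t ht
  have htα : t ≠ α := (hα.trans ht.1).ne'
  have : t - α ≠ 0 := sub_ne_zero.mpr htα
  have : x - α ≠ 0 := sub_ne_zero.mpr hα.ne'
  have : u - α ≠ 0 := sub_ne_zero.mpr (hα.trans (ht.1.trans ht.2)).ne'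
  have h := mobiusInvolution_sub_left (α := α) (x := x) (u := u) (t := mobiusInvolution α x u t)
  rw [sub_mobiusInvolution htα, mobiusInvolution_sub_pole htα] at h
  field_simp at h
  linarith

lemma hasDerivAt_mobiusInvolution (ht : t ≠ α) :
    HasDerivAt (mobiusInvolution α x u) (-((x - α) * (u - α)) / (t - α) ^ 2) t := by
  have h := ((((hasDerivAt_id' t).const_sub u).const_mul (x - α)).div
    ((hasDerivAt_id' t).sub_const α) (sub_ne_zero.mpr ht)).const_add x
  exact h.congr_deriv (by ring)

theorem setIntegral_Ioo_comp_mobiusInvolution (hα : α < x) (g : ℝ → ℝ) :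
    ∫ τ in Ioo x u, g τ =
      ∫ t in Ioo x u, (x - α) * (u - α) / (t - α) ^ 2 * g (mobiusInvolution α x u t) := by
  have hbij := (invOn_mobiusInvolution (u := u) hα).bijOn (mapsTo_mobiusInvolution hα)
    (mapsTo_mobiusInvolution hα)
  have hderiv : ∀ t ∈ Ioo x u, HasDerivWithinAt (mobiusInvolution α x u)
      (-((x - α) * (u - α)) / (t - α) ^ 2) (Ioo x u) t := fun t ht =>
    (hasDerivAt_mobiusInvolution (hα.trans ht.1).ne').hasDerivWithinAt
  rw [← hbij.image_eq, integral_image_eq_integral_abs_deriv_smul measurableSet_Ioo hderiv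
    hbij.injOn, hbij.image_eq]
  refine setIntegral_congr_fun measurableSet_Ioo fun t ht => ?_
  have hαu : α < u := hα.trans (ht.1.trans ht.2)
  rw [smul_eq_mul, neg_div, abs_neg, abs_of_pos (div_pos (mul_pos (sub_pos.2 hα) (sub_pos.2 hαu))
    (pow_pos (sub_pos.2 (hα.trans ht.1)) 2))]

end Mobius

section KernelIdentity

variable {a c x u : ℝ}

lemma setIntegral_inv_mul_sqrt_eq (hax : a < x) (hcx : c < x) :
    ∫ t in Ioo x u, ((t - c) * √((t - a) * (t - x)))⁻¹ =
      √(u - a) * ∫ t in Ioo x u, ((x - c) * (t - a) + (x - a) * (u - t))⁻¹ / √(u - t) := by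
  rw [setIntegral_Ioo_comp_mobiusInvolution hax, ← integral_const_mul]
  refine setIntegral_congr_fun measurableSet_Ioo fun t ⟨hxt, htu⟩ => ?_
  have hta : t ≠ a := (hax.trans hxt).ne'
  have hta' : 0 < t - a := by linarith
  set φ := mobiusInvolution a x u t
  have hφc : φ - c = ((x - c) * (t - a) + (x - a) * (u - t)) / (t - a) := by
    rw [show φ - c = (φ - x) + (x - c) by ring, mobiusInvolution_sub_left]
    field_simp
    ring
  have hφaφx : (φ - a) * (φ - x) = ((x - a) / (t - a)) ^ 2 * ((u - a) * (u - t)) := by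
    rw [mobiusInvolution_sub_pole hta, mobiusInvolution_sub_left]
    ring
  have hL : 0 < (x - c) * (t - a) + (x - a) * (u - t) := by nlinarith
  have hsqrt : √(u - a) ^ 2 = u - a := Real.sq_sqrt (by linarith)
  rw [hφc, hφaφx, Real.sqrt_mul (sq_nonneg _), Real.sqrt_sq (by positivity),
    Real.sqrt_mul (by linarith)]
  have : 0 < √(u - a) := Real.sqrt_pos.mpr (by linarith)
  have : 0 < √(u - t) := Real.sqrt_pos.mpr (by linarith)
  have : 0 < x - a := by linarith
  field_simp
  rw [hsqrt]

lemma setIntegral_inv_mul_sqrt_div_sqrt_eq (hax : a < x) (hcx : c < x) :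
    ∫ t in Ioo x u, ((t - a) * √(t - c))⁻¹ / √(u - t) =
      √(x - c) * ∫ t in Ioo x u, ((x - a) * (t - c) + (x - c) * (u - t))⁻¹ / √(t - x) := by
  rw [setIntegral_Ioo_comp_mobiusInvolution hcx, ← integral_const_mul]
  refine setIntegral_congr_fun measurableSet_Ioo fun t ⟨hxt, htu⟩ => ?_
  have htc : t ≠ c := (hcx.trans hxt).ne'
  have htc' : 0 < t - c := by linarith
  set ψ := mobiusInvolution c x u t
  have hψa : ψ - a = ((x - a) * (t - c) + (x - c) * (u - t)) / (t - c) := by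
    rw [show ψ - a = (ψ - x) + (x - a) by ring, mobiusInvolution_sub_left]
    field_simp
    ring
  have hψc : 0 ≤ ψ - c := by
    rw [mobiusInvolution_sub_pole htc]
    exact div_nonneg (mul_nonneg (by linarith) (by linarith)) htc'.le
  have hψcuψ : (ψ - c) * (u - ψ) = ((u - c) / (t - c)) ^ 2 * ((x - c) * (t - x)) := by
    rw [mobiusInvolution_sub_pole htc, sub_mobiusInvolution htc]
    ring
  have hL : 0 < (x - a) * (t - c) + (x - c) * (u - t) := by nlinarith
  have hsqrt : √(x - c) ^ 2 = x - c := Real.sq_sqrt (by linarith)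
  have : 0 < u - c := by linarith
  have hcomb :
      ((ψ - a) * √(ψ - c))⁻¹ / √(u - ψ) = ((ψ - a) * √((ψ - c) * (u - ψ)))⁻¹ := by
    rw [Real.sqrt_mul hψc, div_eq_mul_inv, ← mul_inv, mul_assoc]
  rw [hcomb, hψa, hψcuψ,
    Real.sqrt_mul (sq_nonneg _), Real.sqrt_sq (by positivity), Real.sqrt_mul (by linarith)]
  have : 0 < √(x - c) := Real.sqrt_pos.mpr (by linarith)
  have : 0 < √(t - x) := Real.sqrt_pos.mpr (by linarith)
  field_simp
  rw [hsqrt]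

lemma setIntegral_Ioo_comp_add_sub (g : ℝ → ℝ) :
    ∫ t in Ioo x u, g (x + u - t) = ∫ t in Ioo x u, g t := by
  rcases lt_or_ge u x with hux | hxu
  · simp [Ioo_eq_empty_of_le hux.le]
  simp only [← integral_Ioc_eq_integral_Ioo, ← intervalIntegral.integral_of_le hxu,
    intervalIntegral.integral_comp_sub_left, add_sub_cancel_left, add_sub_cancel_right]

theorem sqrt_sub_mul_setIntegral_eq (hax : a < x) (hcx : c < x) :
    √(u - a) * ∫ t in Ioo x u, ((t - a) * √(t - c))⁻¹ / √(u - t) =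
      √(x - c) * ∫ t in Ioo x u, ((t - c) * √((t - a) * (t - x)))⁻¹ := by
  rw [setIntegral_inv_mul_sqrt_eq hax hcx, setIntegral_inv_mul_sqrt_div_sqrt_eq hax hcx,
    ← setIntegral_Ioo_comp_add_sub, mul_left_comm]
  congr 3 with t
  ring_nf

end KernelIdentity

section SqrtKernel

variable {x u t : ℝ}

lemma hasDerivAt_two_mul_sqrt_sub (ht : x < t) :
    HasDerivAt (fun s => 2 * √(s - x)) (√(t - x))⁻¹ t := by
  have h := (((hasDerivAt_id' t).sub_const x).sqrt (sub_ne_zero.mpr ht.ne')).const_mul 2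
  have : √(t - x) ≠ 0 := (Real.sqrt_pos.mpr (sub_pos.mpr ht)).ne'
  exact h.congr_deriv (by field_simp)

lemma hasDerivAt_neg_two_mul_sqrt_sub (ht : t < u) :
    HasDerivAt (fun s => -2 * √(u - s)) (√(u - t))⁻¹ t := by
  have h := (((hasDerivAt_id' t).const_sub u).sqrt (sub_ne_zero.mpr ht.ne')).const_mul (-2)
  have : √(u - t) ≠ 0 := (Real.sqrt_pos.mpr (sub_pos.mpr ht)).ne'
  exact h.congr_deriv (by field_simp)

lemma integrableOn_Ioc_inv_sqrt_sub (x b : ℝ) :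
    IntegrableOn (fun t => (√(t - x))⁻¹) (Ioc x b) :=
  intervalIntegral.integrableOn_deriv_of_nonneg (by fun_prop)
    (fun _ ht => hasDerivAt_two_mul_sqrt_sub ht.1) (fun _ _ => by positivity)

lemma integrableOn_Ioc_inv_sqrt_const_sub (x u : ℝ) :
    IntegrableOn (fun t => (√(u - t))⁻¹) (Ioc x u) :=
  intervalIntegral.integrableOn_deriv_of_nonneg (by fun_prop)
    (fun _ ht => hasDerivAt_neg_two_mul_sqrt_sub ht.2) (fun _ _ => by positivity)

lemma inv_sqrt_sub_eq_zero_of_le (h : u ≤ t) : (√(u - t))⁻¹ = 0 := by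
  rw [Real.sqrt_eq_zero_of_nonpos (sub_nonpos.mpr h), inv_zero]

lemma integrableOn_Ioi_inv_sqrt_const_sub (x u : ℝ) :
    IntegrableOn (fun t => (√(u - t))⁻¹) (Ioi x) :=
  ((integrableOn_Ioc_inv_sqrt_const_sub x u).union
    (integrableOn_zero.congr_fun (fun _ ht => (inv_sqrt_sub_eq_zero_of_le (le_of_lt ht)).symm)
      measurableSet_Ioi)).mono_set Ioi_subset_Ioc_union_Ioi

lemma setIntegral_Ioi_inv_sqrt_const_sub (hxu : x ≤ u) :
    ∫ t in Ioi x, (√(u - t))⁻¹ = 2 * √(u - x) := by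
  have hzero : ∫ t in Ioi u, (√(u - t))⁻¹ = 0 :=
    setIntegral_eq_zero_of_forall_eq_zero fun _ ht => inv_sqrt_sub_eq_zero_of_le (le_of_lt ht)
  have hftc : ∫ t in x..u, (√(u - t))⁻¹ = 2 * √(u - x) := by
    rw [intervalIntegral.integral_eq_sub_of_hasDerivAt_of_le hxu (by fun_prop)
      (fun _ ht => hasDerivAt_neg_two_mul_sqrt_sub ht.2)
      ((intervalIntegrable_iff_integrableOn_Ioc_of_le hxu).mpr
        (integrableOn_Ioc_inv_sqrt_const_sub x u))]
    simp
  rw [← Ioc_union_Ioi_eq_Ioi hxu, setIntegral_union (Ioc_disjoint_Ioi le_rfl) measurableSet_Ioi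
      (integrableOn_Ioc_inv_sqrt_const_sub x u)
      ((integrableOn_Ioi_inv_sqrt_const_sub x u).mono_set (Ioi_subset_Ioi hxu)),
    hzero, add_zero, ← intervalIntegral.integral_of_le hxu, hftc]

end SqrtKernel

section TriangleFubini

variable {x b : ℝ}

lemma setIntegral_Ioo_indicator_Ioi {g : ℝ → ℝ} {t : ℝ} (hxt : x ≤ t) :
    ∫ u in Ioo x b, (Ioi t).indicator g u = ∫ u in Ioo t b, g u := by
  rw [setIntegral_indicator measurableSet_Ioi, Ioo_inter_Ioi, max_eq_right hxt]

lemma setIntegral_Ioo_indicator_Iio {g : ℝ → ℝ} {u : ℝ} (hub : u ≤ b) :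
    ∫ t in Ioo x b, (Iio u).indicator g t = ∫ t in Ioo x u, g t := by
  rw [setIntegral_indicator measurableSet_Iio, Ioo_inter_Iio, min_eq_right hub]

lemma integrable_uncurry_indicator_Ioi {F : ℝ → ℝ → ℝ} {μ ν : Measure ℝ}
    (hF : Integrable (Function.uncurry F) (μ.prod ν)) :
    Integrable (Function.uncurry fun t u => (Ioi t).indicator (F t) u) (μ.prod ν) := by
  have h : (Function.uncurry fun t u => (Ioi t).indicator (F t) u) =
      {p : ℝ × ℝ | p.1 < p.2}.indicator (Function.uncurry F) := by
    ext ⟨t, u⟩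
    simp [indicator]
  rw [h]
  exact hF.indicator (measurableSet_lt measurable_fst measurable_snd)

theorem integral_Ioo_integral_Ioo_swap {F : ℝ → ℝ → ℝ}
    (hF : Integrable (Function.uncurry F)
      ((volume.restrict (Ioo x b)).prod (volume.restrict (Ioo x b)))) :
    ∫ t in Ioo x b, ∫ u in Ioo t b, F t u = ∫ u in Ioo x b, ∫ t in Ioo x u, F t u :=
  calc ∫ t in Ioo x b, ∫ u in Ioo t b, F t u
      = ∫ t in Ioo x b, ∫ u in Ioo x b, (Ioi t).indicator (F t) u :=
        setIntegral_congr_fun measurableSet_Ioo fun _ ht =>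
          (setIntegral_Ioo_indicator_Ioi ht.1.le).symm
    _ = ∫ u in Ioo x b, ∫ t in Ioo x b, (Ioi t).indicator (F t) u :=
        integral_integral_swap (integrable_uncurry_indicator_Ioi hF)
    _ = ∫ u in Ioo x b, ∫ t in Ioo x u, F t u :=
        setIntegral_congr_fun measurableSet_Ioo fun u hu => by
          rw [← setIntegral_Ioo_indicator_Iio hu.2.le]
          congr with t

lemma integrableOn_setIntegral_Ioo {F : ℝ → ℝ → ℝ}
    (hF : Integrable (Function.uncurry F)
      ((volume.restrict (Ioo x b)).prod (volume.restrict (Ioo x b)))) :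
    IntegrableOn (fun t => ∫ u in Ioo t b, F t u) (Ioo x b) :=
  (integrable_uncurry_indicator_Ioi hF).integral_prod_left.congr <|
    ae_restrict_of_forall_mem measurableSet_Ioo fun _ ht => setIntegral_Ioo_indicator_Ioi ht.1.le

end TriangleFubini

section Swaps

variable {x b : ℝ}

theorem setIntegral_mul_eq_sub_setIntegral_deriv_mul {f f' k : ℝ → ℝ}
    (hf : ∀ t ∈ Icc x b, HasDerivAt f (f' t) t) (hf' : IntegrableOn f' (Icc x b))
    (hk : IntegrableOn k (Ioo x b)) :
    ∫ t in Ioo x b, f t * k t =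
      (f b * ∫ t in Ioo x b, k t) - ∫ u in Ioo x b, f' u * ∫ t in Ioo x u, k t := by
  have hftc : ∀ t ∈ Ioo x b, f t = f b - ∫ u in Ioo t b, f' u := fun t ht => by
    have hsub : uIcc t b ⊆ Icc x b := by
      rw [uIcc_of_le ht.2.le]
      exact Icc_subset_Icc_left ht.1.le
    rw [← integral_Ioc_eq_integral_Ioo, ← intervalIntegral.integral_of_le ht.2.le,
      intervalIntegral.integral_eq_sub_of_hasDerivAt (fun s hs => hf s (hsub hs))
        ((hf'.mono_set hsub).intervalIntegrable)]
    ring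
  have hF : Integrable (Function.uncurry fun t u => k t * f' u)
      ((volume.restrict (Ioo x b)).prod (volume.restrict (Ioo x b))) :=
    hk.mul_prod (hf'.mono_set Ioo_subset_Icc_self)
  calc ∫ t in Ioo x b, f t * k t
      = ∫ t in Ioo x b, (f b * k t - ∫ u in Ioo t b, k t * f' u) :=
        setIntegral_congr_fun measurableSet_Ioo fun t ht => by
          rw [hftc t ht, integral_const_mul]
          ring
    _ = (f b * ∫ t in Ioo x b, k t) - ∫ t in Ioo x b, ∫ u in Ioo t b, k t * f' u := by
        rw [integral_sub (hk.const_mul _) (integrableOn_setIntegral_Ioo hF), integral_const_mul]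
    _ = (f b * ∫ t in Ioo x b, k t) - ∫ u in Ioo x b, f' u * ∫ t in Ioo x u, k t := by
        simp_rw [integral_Ioo_integral_Ioo_swap hF, integral_mul_const, mul_comm]

lemma integrable_mul_div_sqrt_sub_prod {m g : ℝ → ℝ} {C : ℝ}
    (hm : AEStronglyMeasurable m (volume.restrict (Ioo x b))) (hmC : ∀ t ∈ Ioo x b, |m t| ≤ C)
    (hg : IntegrableOn g (Ioo x b)) :
    Integrable (Function.uncurry fun t u => m t * (g u / √(u - t)))
      ((volume.restrict (Ioo x b)).prod (volume.restrict (Ioo x b))) := by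
  have hmC' : ∀ᵐ t ∂(volume.restrict (Ioo x b)), ‖m t‖ ≤ C :=
    ae_restrict_of_forall_mem measurableSet_Ioo hmC
  have hK : ∀ u, IntegrableOn (fun t => (√(u - t))⁻¹) (Ioo x b) := fun u =>
    (integrableOn_Ioi_inv_sqrt_const_sub x u).mono_set Ioo_subset_Ioi_self
  have hslice : ∀ u, IntegrableOn (fun t => m t * (g u / √(u - t))) (Ioo x b) := fun u =>
    (((hK u).bdd_mul hm hmC').const_mul (g u)).congr
      (Filter.Eventually.of_forall fun t => by simp only; ring)
  have hmeas : AEStronglyMeasurable (Function.uncurry fun t u => m t * (g u / √(u - t)))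
      ((volume.restrict (Ioo x b)).prod (volume.restrict (Ioo x b))) :=
    hm.comp_fst.mul (hg.aestronglyMeasurable.comp_snd.div₀
      (measurable_snd.sub measurable_fst).sqrt.aestronglyMeasurable)
  refine (integrable_prod_iff' hmeas).mpr ⟨Filter.Eventually.of_forall hslice, ?_⟩
  refine (hg.norm.const_mul (C * (2 * √(b - x)))).mono'
    hmeas.norm.prod_swap.integral_prod_right'
    (ae_restrict_of_forall_mem measurableSet_Ioo fun u hu => ?_)
  have hC : 0 ≤ C := (abs_nonneg _).trans (hmC u hu)
  rw [Real.norm_of_nonneg (integral_nonneg fun _ => norm_nonneg _)]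
  calc ∫ t in Ioo x b, ‖m t * (g u / √(u - t))‖
      ≤ ∫ t in Ioo x b, C * ‖g u‖ * (√(u - t))⁻¹ := by
        refine integral_mono_of_nonneg (Filter.Eventually.of_forall fun _ => norm_nonneg _)
          ((hK u).const_mul _) (hmC'.mono fun t ht => ?_)
        dsimp only
        rw [norm_mul, norm_div, Real.norm_of_nonneg (Real.sqrt_nonneg _), div_eq_mul_inv,
          ← mul_assoc]
        gcongr
    _ = C * ‖g u‖ * ∫ t in Ioo x b, (√(u - t))⁻¹ := integral_const_mul _ _
    _ ≤ C * ‖g u‖ * ∫ t in Ioi x, (√(u - t))⁻¹ :=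
        mul_le_mul_of_nonneg_left (setIntegral_mono_set
          (integrableOn_Ioi_inv_sqrt_const_sub x u) (ae_of_all _ fun _ => by positivity)
          Ioo_subset_Ioi_self.eventuallyLE) (by positivity)
    _ ≤ C * (2 * √(b - x)) * ‖g u‖ := by
        rw [setIntegral_Ioi_inv_sqrt_const_sub hu.1.le, mul_right_comm]
        gcongr
        linarith [hu.2]

theorem setIntegral_mul_sub_integral_div_sqrt {m g : ℝ → ℝ} {A C : ℝ}
    (hm : AEStronglyMeasurable m (volume.restrict (Ioo x b))) (hmC : ∀ t ∈ Ioo x b, |m t| ≤ C)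
    (hg : IntegrableOn g (Ioo x b)) :
    ∫ t in Ioo x b, m t * (A / √(b - t) - ∫ u in t..b, g u / √(u - t)) =
      (A * ∫ t in Ioo x b, m t / √(b - t)) -
        ∫ u in Ioo x b, g u * ∫ t in Ioo x u, m t / √(u - t) := by
  have hF := integrable_mul_div_sqrt_sub_prod hm hmC hg
  have hA : IntegrableOn (fun t => A * (m t / √(b - t))) (Ioo x b) :=
    ((((integrableOn_Ioi_inv_sqrt_const_sub x b).mono_set Ioo_subset_Ioi_self).bdd_mul hm
      (ae_restrict_of_forall_mem measurableSet_Ioo hmC)).const_mul A).congr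
      (Filter.Eventually.of_forall fun t => by simp only; ring)
  calc ∫ t in Ioo x b, m t * (A / √(b - t) - ∫ u in t..b, g u / √(u - t))
      = ∫ t in Ioo x b, (A * (m t / √(b - t)) - ∫ u in Ioo t b, m t * (g u / √(u - t))) :=
        setIntegral_congr_fun measurableSet_Ioo fun t ht => by
          rw [intervalIntegral.integral_of_le ht.2.le, integral_Ioc_eq_integral_Ioo,
            integral_const_mul]
          ring
    _ = (A * ∫ t in Ioo x b, m t / √(b - t)) -
          ∫ t in Ioo x b, ∫ u in Ioo t b, m t * (g u / √(u - t)) := by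
        rw [integral_sub hA (integrableOn_setIntegral_Ioo hF), integral_const_mul]
    _ = (A * ∫ t in Ioo x b, m t / √(b - t)) -
          ∫ u in Ioo x b, g u * ∫ t in Ioo x u, m t / √(u - t) := by
        simp_rw [integral_Ioo_integral_Ioo_swap hF, ← integral_const_mul,
          mul_div_left_comm (m _)]

end Swaps

lemma abs_inv_mul_sqrt_sub_le {a c x t : ℝ} (hax : a < x) (hcx : c < x) (hxt : x ≤ t) :
    |((t - a) * √(t - c))⁻¹| ≤ ((x - a) * √(x - c))⁻¹ := by
  have hxa : 0 < x - a := by linarith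
  rw [abs_of_nonneg (inv_nonneg.mpr (mul_nonneg (by linarith) (Real.sqrt_nonneg _)))]
  exact inv_anti₀ (mul_pos hxa (Real.sqrt_pos.mpr (by linarith)))
    (mul_le_mul (by linarith) (Real.sqrt_le_sqrt (by linarith)) (Real.sqrt_nonneg _)
      (by linarith))

lemma integrableOn_inv_mul_sqrt {a c x : ℝ} (hax : a < x) (hcx : c < x) (b : ℝ) :
    IntegrableOn (fun t => ((t - c) * √((t - a) * (t - x)))⁻¹) (Ioo x b) := by
  refine (((integrableOn_Ioc_inv_sqrt_sub x b).mono_set Ioo_subset_Ioc_self).const_mul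
    ((x - c) * √(x - a))⁻¹).mono' (by fun_prop)
    (ae_restrict_of_forall_mem measurableSet_Ioo fun t ht => ?_)
  have hta : 0 ≤ t - a := by linarith [ht.1]
  have htc : 0 ≤ t - c := by linarith [ht.1]
  rw [Real.norm_of_nonneg (by positivity), Real.sqrt_mul hta, ← mul_assoc, mul_inv]
  exact mul_le_mul_of_nonneg_right ((le_abs_self _).trans (abs_inv_mul_sqrt_sub_le hcx hax ht.1.le))
    (by positivity)

theorem stmt_2_general (a c : ℝ) (f : ℝ → ℝ)
    (hdiff : ∀ t ∈ Set.Ioo a 1, DifferentiableAt ℝ f t)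
    (hbdd : ∀ p q : ℝ, a < p → q < 1 →
      ∃ M : ℝ, ∀ t ∈ Set.Icc p q, |deriv f t| ≤ M)
    (ε : ℝ) (hε0 : 0 < ε)
    (x : ℝ) (hx : max a c < x) (hx1 : x < 1 - ε) :
    (∫ t in x..(1 - ε), f t / ((t - c) * Real.sqrt ((t - a) * (t - x)))) =
      (Real.sqrt (x - c))⁻¹ *
        ∫ t in x..(1 - ε), ((t - a) * Real.sqrt (t - c))⁻¹ *
          (Real.sqrt (1 - a - ε) * f (1 - ε) / Real.sqrt (1 - t - ε)
            - ∫ u in t..(1 - ε), Real.sqrt (u - a) * deriv f u / Real.sqrt (u - t)) := by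
  obtain ⟨hax, hcx⟩ := max_lt_iff.mp hx
  simp only [show ∀ s, 1 - s - ε = 1 - ε - s from fun s => by ring]
  set b := 1 - ε
  have hIcc : Icc x b ⊆ Ioo a 1 := fun t ht =>
    ⟨hax.trans_le ht.1, ht.2.trans_lt (by linarith)⟩
  obtain ⟨M, hM⟩ := hbdd x b hax (by linarith)
  have hf' : IntegrableOn (deriv f) (Icc x b) :=
    Measure.integrableOn_of_bounded measure_Icc_lt_top.ne
      (measurable_deriv f).aestronglyMeasurable (ae_restrict_of_forall_mem measurableSet_Icc hM)
  simp only [intervalIntegral.integral_of_le hx1.le, integral_Ioc_eq_integral_Ioo,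
    div_eq_mul_inv (f _)]
  rw [setIntegral_mul_eq_sub_setIntegral_deriv_mul (fun t ht => (hdiff t (hIcc ht)).hasDerivAt)
      hf' (integrableOn_inv_mul_sqrt hax hcx b),
    setIntegral_mul_sub_integral_div_sqrt (by fun_prop)
      (fun t ht => abs_inv_mul_sqrt_sub_le hax hcx ht.1.le)
      ((hf'.continuousOn_mul (by fun_prop) isCompact_Icc).mono_set Ioo_subset_Icc_self)]
  simp_rw [mul_comm (deriv f _), mul_right_comm _ (f b), mul_right_comm _ (deriv f _),
    sqrt_sub_mul_setIntegral_eq hax hcx, mul_assoc, integral_const_mul]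
  have hsqrt : √(x - c) ≠ 0 := (Real.sqrt_pos.mpr (sub_pos.mpr hcx)).ne'
  field_simp

/-- Lemma 4.3 (Convolution1c): for `a < 0`, `c < 0`, `f` differentiable on `(a,1)`
with locally bounded derivative, `ε > 0` and `max a c < x < 1 - ε`,
`∫_x^{1-ε} f(t)/((t-c)·√((t-a)(t-x))) dt
  = (1/√(x-c)) ∫_x^{1-ε} 1/((t-a)·√(t-c)) ·
      (√(1-a-ε)·f(1-ε)/√(1-t-ε) - ∫_t^{1-ε} √(u-a)·f'(u)/√(u-t) du) dt`. -/
theorem stmt_2 (a c : ℝ) (ha : a < 0) (hc : c < 0) (f : ℝ → ℝ)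
    (hdiff : ∀ t ∈ Set.Ioo a 1, DifferentiableAt ℝ f t)
    (hbdd : ∀ p q : ℝ, a < p → q < 1 →
      ∃ M : ℝ, ∀ t ∈ Set.Icc p q, |deriv f t| ≤ M)
    (ε : ℝ) (hε0 : 0 < ε)
    (x : ℝ) (hx : max a c < x) (hx1 : x < 1 - ε) :
    (∫ t in x..(1 - ε), f t / ((t - c) * Real.sqrt ((t - a) * (t - x)))) =
      (Real.sqrt (x - c))⁻¹ *
        ∫ t in x..(1 - ε), ((t - a) * Real.sqrt (t - c))⁻¹ *
          (Real.sqrt (1 - a - ε) * f (1 - ε) / Real.sqrt (1 - t - ε)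
            - ∫ u in t..(1 - ε), Real.sqrt (u - a) * deriv f u / Real.sqrt (u - t)) :=
  stmt_2_general a c f hdiff hbdd ε hε0 x hx hx1
end

section
/- Let d ≥ 1이 and let f : [0,1] → ℝ be d-times continuously differentiable. Suppose there are real polynomials p_0, …, p_d with p_d not identically zero such that p_d(x)·f^{(d)}(x) + ⋯ + p_1(x)·f′(x) + p_0(x)·f(x) = 0 for all x ∈ [0,1]. Then the sequence n ↦ M[f](n) = ∫_0^1 x^n f(x) dx is P-finite: there exist e ≥ 0, real polynomials q_0, …, q_e not all identically zero, and n_0 ∈ ℕ such that q_e(n)·M[f](n+e) + ⋯ + q_1(n)·M[f](n+1) + q_0(n)·M[f](n) = 0 for all natural numbers n ≥ n_0. -/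
/-!
Write `M n = ∫₀¹ xⁿ f x dx`. Integrating by parts `i` times gives
`∫₀¹ x^(m+i) f⁽ⁱ⁾ = β(m) + (-1)ⁱ (m+1)⋯(m+i) M m` with `β` a polynomial (collecting the boundary
terms). Multiplying the differential equation by `x^(n+d)` and integrating therefore yields an
inhomogeneous recurrence `L M = b` with polynomial right-hand side `b`; the recurrence operator is
nonzero because the shift `deg p_d` carries a coefficient of degree exactly `d` in `n`, coming
only from `p_d f⁽ᵈ⁾`. Finally `deg b + 1` forward differences annihilate `b`, and each forward
difference keeps the operator nonzero, raising its order by one.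
-/

open Polynomial Finset Set

section Recurrence

variable {R : Type*} [CommRing R]

def IsPFinite (u : ℕ → R) : Prop :=
  ∃ (e : ℕ) (q : ℕ → R[X]) (n₀ : ℕ), (∃ j ≤ e, q j ≠ 0) ∧
    ∀ n : ℕ, n₀ ≤ n → ∑ j ∈ range (e + 1), (q j).eval (n : R) * u (n + j) = 0

/-- The operator `L = ∑ⱼ qⱼ Sʲ`, with coefficients to the left of the shift `S`, applied to `u`
at `n`: `∑ⱼ qⱼ(n) u(n + j)`. -/
noncomputable def shiftEval (u : ℕ → R) (n : ℕ) : R[X][X] →ₗ[R] R :=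
  lsum fun j => LinearMap.mulRight R (u (n + j)) ∘ₗ leval (n : R)

theorem shiftEval_monomial (u : ℕ → R) (n j : ℕ) (c : R[X]) :
    shiftEval u n (monomial j c) = c.eval (n : R) * u (n + j) := by
  simp [shiftEval]

/-- `Δ ∘ L`, by the commutation rule `S ∘ q = q(· + 1) ∘ S`. -/
noncomputable def diffOp (L : R[X][X]) : R[X][X] :=
  X * L.map (taylorAlgHom (1 : R)).toRingHom - L

theorem shiftEval_diffOp (u : ℕ → R) (n : ℕ) (L : R[X][X]) :
    shiftEval u n (diffOp L) = shiftEval u (n + 1) L - shiftEval u n L := by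
  induction L using Polynomial.induction_on' with
  | add p q hp hq =>
    simp only [diffOp, Polynomial.map_add, mul_add, map_add, map_sub] at hp hq ⊢
    linear_combination hp + hq
  | monomial j c =>
    rw [diffOp, Polynomial.map_monomial, X_mul_monomial, map_sub, shiftEval_monomial,
      shiftEval_monomial, shiftEval_monomial, AlgHom.toRingHom_eq_coe, RingHom.coe_coe,
      taylorAlgHom_apply, taylor_eval, Nat.cast_succ, add_right_comm n 1 j, add_assoc]

theorem diffOp_ne_zero {L : R[X][X]} (hL : L ≠ 0) : diffOp L ≠ 0 := by
  intro h
  have := congrArg (coeff · (L.natDegree + 1)) h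
  simp only [diffOp, coeff_sub, coeff_X_mul, coeff_map, coeff_zero,
    coeff_eq_zero_of_natDegree_lt (Nat.lt_succ_self _), sub_zero] at this
  exact leadingCoeff_ne_zero.mpr hL ((taylor_eq_zero 1 _).mp this)

theorem diffOp_iterate_ne_zero {L : R[X][X]} (hL : L ≠ 0) (k : ℕ) : diffOp^[k] L ≠ 0 := by
  induction k with
  | zero => exact hL
  | succ k ih => exact Function.iterate_succ_apply' diffOp k L ▸ diffOp_ne_zero ih

theorem fwdDiff_iter_shiftEval (u : ℕ → R) (L : R[X][X]) (k : ℕ) :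
    (fwdDiff 1)^[k] (fun n => shiftEval u n L) = fun n => shiftEval u n (diffOp^[k] L) := by
  induction k with
  | zero => rfl
  | succ k ih =>
    rw [Function.iterate_succ_apply', ih, Function.iterate_succ_apply']
    ext n
    rw [fwdDiff, shiftEval_diffOp]

theorem fwdDiff_iter_comp_natCast {S G : Type*} [AddCommMonoidWithOne S] [AddCommGroup G]
    (g : S → G) (k : ℕ) :
    (fwdDiff 1)^[k] (fun n : ℕ => g n) = fun n : ℕ => ((fwdDiff 1)^[k] g) n := by
  induction k with
  | zero => rfl
  | succ k ih =>
    rw [Function.iterate_succ_apply', ih, Function.iterate_succ_apply']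
    ext n
    simp [fwdDiff]

theorem fwdDiff_iter_eval_natCast_eq_zero {b : R[X]} {k : ℕ} (hk : b.natDegree < k) :
    (fwdDiff 1)^[k] (fun n : ℕ => b.eval (n : R)) = 0 := by
  rw [fwdDiff_iter_comp_natCast b.eval, fwdDiff_iter_eq_zero_of_degree_lt hk]
  rfl

theorem isPFinite_of_shiftEval_eq_zero {u : ℕ → R} {L : R[X][X]} (hL : L ≠ 0)
    (h : ∀ n, shiftEval u n L = 0) : IsPFinite u := by
  refine ⟨L.natDegree, L.coeff, 0, ⟨_, le_rfl, leadingCoeff_ne_zero.mpr hL⟩, fun n _ => ?_⟩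
  rw [← h n, shiftEval, lsum_apply, sum_over_range]
  · simp [mul_comm]
  · simp

theorem isPFinite_of_shiftEval_eq_eval {u : ℕ → R} {L : R[X][X]} {b : R[X]} (hL : L ≠ 0)
    (h : ∀ n, shiftEval u n L = b.eval (n : R)) : IsPFinite u := by
  refine isPFinite_of_shiftEval_eq_zero (diffOp_iterate_ne_zero hL (b.natDegree + 1))
    fun n => ?_
  have hΔ := fwdDiff_iter_eval_natCast_eq_zero (Nat.lt_succ_self b.natDegree)
  rw [← funext h, fwdDiff_iter_shiftEval] at hΔ
  exact congrFun hΔ n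

end Recurrence

noncomputable def mellinSeq (f : ℝ → ℝ) (n : ℕ) : ℝ := ∫ x in (0 : ℝ)..1, x ^ n * f x

theorem intervalIntegrable_pow_mul {g : ℝ → ℝ} (hg : ContinuousOn g (Icc 0 1)) (n : ℕ) :
    IntervalIntegrable (fun x => x ^ n * g x) MeasureTheory.volume 0 1 :=
  ((continuous_pow n).continuousOn.mul hg).intervalIntegrable_of_Icc zero_le_one

theorem mellinSeq_derivWithin_succ {g : ℝ → ℝ} (hg : DifferentiableOn ℝ g (Icc 0 1))
    (hg' : ContinuousOn (derivWithin g (Icc 0 1)) (Icc 0 1)) (k : ℕ) :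
    mellinSeq (derivWithin g (Icc 0 1)) (k + 1) = g 1 - (k + 1) * mellinSeq g k := by
  have hibp := intervalIntegral.integral_mul_deriv_eq_deriv_mul_of_hasDerivWithinAt
    (u' := fun x : ℝ => (k + 1) * x ^ k) (v := g)
    (fun x _ => by simpa using (hasDerivAt_pow (k + 1) x).hasDerivWithinAt)
    (fun x hx => by
      rw [Set.uIcc_of_le zero_le_one] at hx ⊢
      exact (hg x hx).hasDerivWithinAt)
    ((continuous_const.mul (continuous_pow k)).intervalIntegrable 0 1)
    (hg'.intervalIntegrable_of_Icc zero_le_one)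
  simp [mellinSeq, hibp, mul_assoc, intervalIntegral.integral_const_mul]

theorem exists_mellinSeq_iteratedDerivWithin {d : ℕ} {f : ℝ → ℝ}
    (hf : ContDiffOn ℝ d f (Icc 0 1)) {i : ℕ} (hi : i ≤ d) :
    ∃ β : ℝ[X], ∀ m : ℕ, mellinSeq (iteratedDerivWithin i f (Icc 0 1)) (m + i) =
      β.eval (m : ℝ) + (-1) ^ i * (ascPochhammer ℝ i).eval ((m : ℝ) + 1) * mellinSeq f m := by
  induction i with
  | zero => exact ⟨0, fun m => by simp⟩
  | succ i ih =>
    obtain ⟨β, hβ⟩ := ih (Nat.le_of_succ_le hi)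
    set g := iteratedDerivWithin i f (Icc 0 1)
    have hg : DifferentiableOn ℝ g (Icc 0 1) :=
      hf.differentiableOn_iteratedDerivWithin (by exact_mod_cast hi) uniqueDiffOn_Icc_zero_one
    have hg' : ContinuousOn (derivWithin g (Icc 0 1)) (Icc 0 1) := by
      rw [← iteratedDerivWithin_succ]
      exact hf.continuousOn_iteratedDerivWithin (by exact_mod_cast hi) uniqueDiffOn_Icc_zero_one
    refine ⟨C (g 1) - (X + C ((i : ℝ) + 1)) * β, fun m => ?_⟩
    rw [iteratedDerivWithin_succ, ← add_assoc, mellinSeq_derivWithin_succ hg hg', hβ,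
      ascPochhammer_succ_eval]
    simp only [eval_sub, eval_mul, eval_add, eval_X, eval_C]
    push_cast
    ring

theorem mellinSeq_polynomial_mul {g : ℝ → ℝ} (hg : ContinuousOn g (Icc 0 1)) (p : ℝ[X])
    (n : ℕ) : mellinSeq (fun x => p.eval x * g x) n =
      ∑ k ∈ range (p.natDegree + 1), p.coeff k * mellinSeq g (n + k) := by
  have hexpand : (fun x => x ^ n * (p.eval x * g x)) =
      fun x => ∑ k ∈ range (p.natDegree + 1), p.coeff k * (x ^ (n + k) * g x) := by
    ext x
    rw [eval_eq_sum_range, Finset.sum_mul, Finset.mul_sum]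
    exact Finset.sum_congr rfl fun k _ => by ring
  rw [mellinSeq, hexpand, intervalIntegral.integral_finsetSum fun k _ =>
    (intervalIntegrable_pow_mul hg (n + k)).const_mul (p.coeff k)]
  simp only [intervalIntegral.integral_const_mul, mellinSeq]

theorem sum_mellinSeq_eq_zero {ι : Type*} {s : Finset ι} {g : ι → ℝ → ℝ}
    (hg : ∀ i ∈ s, ContinuousOn (g i) (Icc 0 1)) (h : ∀ x ∈ Icc (0 : ℝ) 1, ∑ i ∈ s, g i x = 0)
    (n : ℕ) : ∑ i ∈ s, mellinSeq (g i) n = 0 := by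
  simp only [mellinSeq]
  rw [← intervalIntegral.integral_finsetSum fun i hi => intervalIntegrable_pow_mul (hg i hi) n]
  refine (intervalIntegral.integral_congr fun x hx => ?_).trans intervalIntegral.integral_zero
  rw [Set.uIcc_of_le zero_le_one] at hx
  simp only [← Finset.mul_sum, h x hx, mul_zero]

/-- `∑ᵢ ∑ₖ (p i)ₖ (-1)ⁱ (n+j+1)⋯(n+j+i) Sʲ` with `j = d - i + k`: integrating
`x^(n+d) p_i(x) f⁽ⁱ⁾(x)` by parts gives its `i`-th summand applied to `M[f]`, up to a polynomial
in `n`. -/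
noncomputable def mellinRecurrence (d : ℕ) (p : ℕ → ℝ[X]) : ℝ[X][X] :=
  ∑ i ∈ range (d + 1), ∑ k ∈ range ((p i).natDegree + 1),
    monomial (d - i + k)
      (C ((p i).coeff k * (-1) ^ i) * taylor ((d - i + k : ℕ) + 1 : ℝ) (ascPochhammer ℝ i))

theorem coeff_coeff_mellinRecurrence (d : ℕ) (p : ℕ → ℝ[X]) :
    ((mellinRecurrence d p).coeff (p d).natDegree).coeff d = (p d).leadingCoeff * (-1) ^ d := by
  have hdeg : ∀ i r, (taylor r (ascPochhammer ℝ i)).natDegree = i := fun i r => by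
    rw [natDegree_taylor, ascPochhammer_natDegree]
  have hlead : ∀ i r, (taylor r (ascPochhammer ℝ i)).coeff i = 1 := fun i r => by
    simpa [ascPochhammer_natDegree, (monic_ascPochhammer ℝ i).leadingCoeff] using
      coeff_taylor_natDegree (r := r) (f := ascPochhammer ℝ i)
  simp only [mellinRecurrence, finsetSum_coeff, coeff_monomial, apply_ite (coeff · d),
    coeff_zero, coeff_C_mul]
  rw [Finset.sum_eq_single_of_mem d (by simp), Finset.sum_eq_single_of_mem (p d).natDegree
    (by simp)]
  · rw [Nat.sub_self, zero_add, if_pos rfl, hlead, mul_one, leadingCoeff]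
  · intro k _ hk
    rw [Nat.sub_self, zero_add, if_neg hk]
  · intro i hi hid
    have hlt : i < d := by
      have := Finset.mem_range.mp hi
      omega
    refine Finset.sum_eq_zero fun k _ => ?_
    rw [coeff_eq_zero_of_natDegree_lt (p := taylor _ _) (by rwa [hdeg]), mul_zero, ite_self]

theorem mellinRecurrence_ne_zero {d : ℕ} {p : ℕ → ℝ[X]} (hp : p d ≠ 0) :
    mellinRecurrence d p ≠ 0 := by
  intro h
  have := coeff_coeff_mellinRecurrence d p
  rw [h, coeff_zero, coeff_zero] at this
  exact mul_ne_zero (leadingCoeff_ne_zero.mpr hp) (pow_ne_zero _ (by norm_num)) this.symm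

theorem exists_shiftEval_mellinSeq_mellinRecurrence_eq_eval {d : ℕ} {f : ℝ → ℝ}
    (hf : ContDiffOn ℝ d f (Icc 0 1)) {p : ℕ → ℝ[X]}
    (hode : ∀ x ∈ Icc (0 : ℝ) 1,
      ∑ i ∈ range (d + 1), (p i).eval x * iteratedDerivWithin i f (Icc 0 1) x = 0) :
    ∃ b : ℝ[X], ∀ n : ℕ, shiftEval (mellinSeq f) n (mellinRecurrence d p) = b.eval (n : ℝ) := by
  choose! β hβ using fun i (hi : i ≤ d) => exists_mellinSeq_iteratedDerivWithin hf hi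
  have hcont : ∀ i ∈ range (d + 1),
      ContinuousOn (iteratedDerivWithin i f (Icc 0 1)) (Icc 0 1) := fun i hi =>
    hf.continuousOn_iteratedDerivWithin (by exact_mod_cast Finset.mem_range_succ_iff.mp hi)
      uniqueDiffOn_Icc_zero_one
  refine ⟨-∑ i ∈ range (d + 1), ∑ k ∈ range ((p i).natDegree + 1),
    C ((p i).coeff k) * taylor ((d - i + k : ℕ) : ℝ) (β i), fun n => ?_⟩
  have hsum := sum_mellinSeq_eq_zero
    (g := fun i x => (p i).eval x * iteratedDerivWithin i f (Icc 0 1) x)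
    (fun i hi => (p i).continuous.continuousOn.mul (hcont i hi)) hode (n + d)
  rw [eval_neg, eq_neg_iff_add_eq_zero, ← hsum, mellinRecurrence, map_sum, eval_finsetSum,
    ← sum_add_distrib]
  refine Finset.sum_congr rfl fun i hi => ?_
  rw [mellinSeq_polynomial_mul (hcont i hi), map_sum, eval_finsetSum, ← sum_add_distrib]
  refine Finset.sum_congr rfl fun k _ => ?_
  rw [show n + d + k = n + (d - i + k) + i by have := Finset.mem_range_succ_iff.mp hi; omega,
    hβ i (Finset.mem_range_succ_iff.mp hi), shiftEval_monomial]
  simp only [eval_mul, eval_C, taylor_eval, Nat.cast_add, add_assoc]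
  ring

theorem stmt_13_general (d : ℕ) (f : ℝ → ℝ)
    (hf : ContDiffOn ℝ d f (Set.Icc 0 1))
    (p : ℕ → Polynomial ℝ) (hp : p d ≠ 0)
    (hode : ∀ x ∈ Set.Icc (0 : ℝ) 1,
      ∑ i ∈ Finset.range (d + 1),
        (p i).eval x * iteratedDerivWithin i f (Set.Icc 0 1) x = 0) :
    ∃ (e : ℕ) (q : ℕ → Polynomial ℝ) (n₀ : ℕ),
      (∃ j ≤ e, q j ≠ 0) ∧
      ∀ n : ℕ, n₀ ≤ n →
        ∑ j ∈ Finset.range (e + 1),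
          (q j).eval (n : ℝ) * ∫ x in (0 : ℝ)..1, x ^ (n + j) * f x = 0 := by
  obtain ⟨b, hb⟩ := exists_shiftEval_mellinSeq_mellinRecurrence_eq_eval hf hode
  exact isPFinite_of_shiftEval_eq_eval (mellinRecurrence_ne_zero hp) hb

/-- Proposition in Section 6: if `f : [0,1] → ℝ` is `d`-times continuously
differentiable (`d ≥ 1`) and satisfies a linear ODE with polynomial
coefficients `p_d·f^{(d)} + ⋯ + p_0·f = 0` on `[0,1]` with `p_d` not
identically zero, then its Mellin transform `n ↦ ∫_0^1 x^n f(x) dx` is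
`P`-finite: there are `e ≥ 0`, polynomials `q_0,…,q_e` not all zero and
`n₀ ∈ ℕ` with `Σ_{j=0}^e q_j(n)·M[f](n+j) = 0` for all `n ≥ n₀`. -/
theorem stmt_13 (d : ℕ) (hd : 1 ≤ d) (f : ℝ → ℝ)
    (hf : ContDiffOn ℝ d f (Set.Icc 0 1))
    (p : ℕ → Polynomial ℝ) (hp : p d ≠ 0)
    (hode : ∀ x ∈ Set.Icc (0 : ℝ) 1,
      ∑ i ∈ Finset.range (d + 1),
        (p i).eval x * iteratedDerivWithin i f (Set.Icc 0 1) x = 0) :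
    ∃ (e : ℕ) (q : ℕ → Polynomial ℝ) (n₀ : ℕ),
      (∃ j ≤ e, q j ≠ 0) ∧
      ∀ n : ℕ, n₀ ≤ n →
        ∑ j ∈ Finset.range (e + 1),
          (q j).eval (n : ℝ) * ∫ x in (0 : ℝ)..1, x ^ (n + j) * f x = 0 :=
  stmt_13_general d f hf p hp hode
end

section
/- Let a < 0 and let f : (0,1) → ℝ be continuously differentiable. Fix ε ∈ (0,1) and assume that x ↦ f(x) and x ↦ x·√(x−a)·f′(x) are Lebesgue integrable on (0, 1−ε). Then for every natural number N: ∫_0^{1−ε} x^N·f(x)/√(x−a) dx = ( (4a)^N / ((2N+1)·C(2N,N)) ) · ( ∫_0^{1−ε} f(x)/√(x−a) dx + 2·Σ_{i=1}^{N} ( C(2i,i)/(4a)^i ) · ( √(1−a−ε)·(1−ε)^i·f(1−ε) − ∫_0^{1−ε} x^i·√(x−a)·f′(x) dx ) ). -/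
/-!
Write `I k = ∫₀ᶜ xᵏ f(x)/√(x-a)`. Integrating `f'` by parts against `x^(M+1) √(x-a)` on
`[d, c]` gives `(2M+3) I (M+1) = 2(M+1) a I M + 2 B (M+1)`, with `B` the bracket of the
statement, up to a boundary term `d · G d` where `G x = x^M √(x-a) f(x)`. As `d → 0⁺` all other
terms converge, hence so does `d · G d`; since `G` is integrable near `0`, that limit is `0`, for
otherwise `|G x| ≳ 1/x`. The recurrence is then solved using
`(n+1) C(2n+2, n+1) = 2(2n+1) C(2n, n)`.
-/

open MeasureTheory Set Filter Topology Asymptotics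

theorem eq_centralBinom_sum_of_recurrence {a : ℝ} (ha : a ≠ 0) {I B : ℕ → ℝ}
    (h : ∀ M : ℕ, (2 * M + 3) * I (M + 1) = 2 * (M + 1) * a * I M + 2 * B (M + 1)) (N : ℕ) :
    I N = (4 * a) ^ N / ((2 * (N : ℝ) + 1) * (Nat.choose (2 * N) N : ℝ)) *
      (I 0 + 2 * ∑ i ∈ Finset.Icc 1 N, ((Nat.choose (2 * i) i : ℝ) / (4 * a) ^ i) * B i) := by
  suffices key : ∀ N : ℕ, (2 * (N : ℝ) + 1) * Nat.choose (2 * N) N * I N =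
      (4 * a) ^ N *
        (I 0 + 2 * ∑ i ∈ Finset.Icc 1 N, ((Nat.choose (2 * i) i : ℝ) / (4 * a) ^ i) * B i) by
    have hD : (2 * (N : ℝ) + 1) * Nat.choose (2 * N) N ≠ 0 := by
      have := Nat.choose_pos (Nat.le_mul_of_pos_left N two_pos)
      positivity
    rw [div_mul_eq_mul_div, eq_div_iff hD, mul_comm, key]
  intro N
  induction N with
  | zero => simp
  | succ M ih =>
    have hC : ((M : ℝ) + 1) * Nat.choose (2 * (M + 1)) (M + 1) =
        2 * (2 * M + 1) * Nat.choose (2 * M) M := by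
      exact_mod_cast Nat.succ_mul_centralBinom_succ M
    have hpow : (4 * a) ^ (M + 1) * ((Nat.choose (2 * (M + 1)) (M + 1) : ℝ) / (4 * a) ^ (M + 1)) =
        Nat.choose (2 * (M + 1)) (M + 1) := by
      field_simp
    rw [Finset.sum_Icc_succ_top (by omega)]
    push_cast
    linear_combination (Nat.choose (2 * (M + 1)) (M + 1) : ℝ) * h M + 2 * a * I M * hC +
      4 * a * ih - 2 * B (M + 1) * hpow

theorem eq_zero_of_integrableOn_of_tendsto_mul {G : ℝ → ℝ} {c L : ℝ} (hc : 0 < c)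
    (hG : IntegrableOn G (Ioo 0 c)) (hL : Tendsto (fun x => x * G x) (𝓝[>] 0) (𝓝 L)) :
    L = 0 := by
  by_contra hL0
  have hone : (fun _ => (1 : ℝ)) =O[𝓝[>] 0] fun x => x * G x := by
    rw [isBigO_const_left_iff_pos_le_norm one_ne_zero]
    exact ⟨‖L‖ / 2, by positivity,
      hL.norm.eventually (eventually_ge_nhds (by simpa using hL0))⟩
  have hinv : (fun x : ℝ => x⁻¹) =O[𝓝[>] 0] G := by
    refine (((isBigO_refl (fun x : ℝ => x⁻¹) _).mul hone).congr_left fun x => mul_one _).congr'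
      EventuallyEq.rfl ?_
    filter_upwards [self_mem_nhdsWithin] with x (hx : 0 < x)
    field_simp [hx.ne']
  refine not_integrableOn_of_tendsto_norm_atTop_of_deriv_isBigO_filter (f := Real.log)
    (𝓝[>] 0) (Ioo_mem_nhdsGT hc) ?_ ?_ ?_ hG
  · filter_upwards [self_mem_nhdsWithin] with x hx using Real.differentiableAt_log hx.ne'
  · exact tendsto_abs_atBot_atTop.comp Real.tendsto_log_nhdsGT_zero
  · rwa [Real.deriv_log']

theorem integrableOn_Icc_mul_of_integrableOn_Ioo {g h : ℝ → ℝ} {b c : ℝ}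
    (hg : IntegrableOn g (Ioo b c)) (hh : ContinuousOn h (Icc b c)) :
    IntegrableOn (fun x => h x * g x) (Icc b c) := by
  rw [integrableOn_Icc_iff_integrableOn_Ioo]
  exact hg.continuousOn_mul_of_subset hh isCompact_Icc measurableSet_Ioo Ioo_subset_Icc_self

theorem tendsto_integral_lowerLimit_nhdsGT {g : ℝ → ℝ} {b c : ℝ} (hbc : b < c)
    (hg : IntegrableOn g (Icc b c)) :
    Tendsto (fun d => ∫ x in d..c, g x) (𝓝[>] b) (𝓝 (∫ x in b..c, g x)) := by
  rw [← uIcc_of_le hbc.le] at hg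
  rw [← nhdsWithin_Ioo_eq_nhdsGT hbc]
  exact (intervalIntegral.continuousOn_primitive_interval_left hg b left_mem_uIcc).mono
    (Ioo_subset_Icc_self.trans (uIcc_of_le hbc.le).symm.subset)

theorem integral_pow_mul_div_sqrt_recurrence_of_lt {a c d : ℝ} {f : ℝ → ℝ} (had : a < d)
    (hdc : d ≤ c) (hdiff : ∀ x ∈ Icc d c, DifferentiableAt ℝ f x)
    (hcont : ContinuousOn (deriv f) (Icc d c)) (M : ℕ) :
    (2 * M + 3) * ∫ x in d..c, x ^ (M + 1) * f x / √(x - a) =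
      2 * (M + 1) * a * (∫ x in d..c, x ^ M * f x / √(x - a)) +
        2 * (√(c - a) * c ^ (M + 1) * f c - ∫ x in d..c, x ^ (M + 1) * √(x - a) * deriv f x) -
        2 * (d * (d ^ M * √(d - a) * f d)) := by
  have huIcc : uIcc d c = Icc d c := uIcc_of_le hdc
  have hpos : ∀ x ∈ Icc d c, 0 < x - a := fun x hx => by linarith [hx.1]
  have hsqrt : ContinuousOn (fun x => √(x - a)) (Icc d c) := by fun_prop
  have hsqrt0 : ∀ x ∈ Icc d c, √(x - a) ≠ 0 := fun x hx => (Real.sqrt_pos.2 (hpos x hx)).ne'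
  have hf : ContinuousOn f (Icc d c) := fun x hx => (hdiff x hx).continuousAt.continuousWithinAt
  let u' : ℝ → ℝ := fun x => (M + 1) * x ^ M * √(x - a) + x ^ (M + 1) / (2 * √(x - a))
  have hu : ∀ x ∈ uIcc d c, HasDerivAt (fun x => x ^ (M + 1) * √(x - a)) (u' x) x := by
    intro x hx
    rw [huIcc] at hx
    exact ((hasDerivAt_pow (M + 1) x).mul (((hasDerivAt_id x).sub_const a).sqrt
      (hpos x hx).ne')).congr_deriv (by simp [u']; ring)
  have hu' : ContinuousOn u' (uIcc d c) := by
    rw [huIcc]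
    exact (by fun_prop : ContinuousOn (fun x => (M + 1) * x ^ M * √(x - a)) _).add
      ((continuousOn_pow _).div (continuousOn_const.mul hsqrt)
        fun x hx => mul_ne_zero two_ne_zero (hsqrt0 x hx))
  have hint : ∀ k : ℕ, IntervalIntegrable (fun x => x ^ k * f x / √(x - a)) volume d c :=
    fun k => ContinuousOn.intervalIntegrable (by
      rw [huIcc]; exact ((continuousOn_pow k).mul hf).div hsqrt hsqrt0)
  have hibp := intervalIntegral.integral_mul_deriv_eq_deriv_mul hu
    (fun x hx => (hdiff x (by rwa [huIcc] at hx)).hasDerivAt) hu'.intervalIntegrable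
    (ContinuousOn.intervalIntegrable (huIcc ▸ hcont))
  have hsplit : ∫ x in d..c, u' x * f x =
      (2 * M + 3) / 2 * (∫ x in d..c, x ^ (M + 1) * f x / √(x - a)) -
        (M + 1) * a * ∫ x in d..c, x ^ M * f x / √(x - a) := by
    rw [← intervalIntegral.integral_const_mul, ← intervalIntegral.integral_const_mul,
      ← intervalIntegral.integral_sub ((hint _).const_mul _) ((hint _).const_mul _)]
    refine intervalIntegral.integral_congr fun x hx => ?_
    rw [huIcc] at hx
    have hsq := Real.sq_sqrt (hpos x hx).le
    simp only [u']
    field_simp [hsqrt0 x hx]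
    linear_combination (2 * (M + 1) * x ^ M * f x) * hsq
  rw [hsplit] at hibp
  linear_combination 2 * hibp

theorem integral_pow_mul_div_sqrt_recurrence {a c : ℝ} {f : ℝ → ℝ} (ha : a < 0) (hc : 0 < c)
    (hdiff : ∀ x ∈ Ioc 0 c, DifferentiableAt ℝ f x) (hcont : ContinuousOn (deriv f) (Ioc 0 c))
    (hf : IntegrableOn f (Ioo 0 c))
    (hf' : IntegrableOn (fun x => x * √(x - a) * deriv f x) (Ioo 0 c)) (M : ℕ) :
    (2 * M + 3) * ∫ x in 0..c, x ^ (M + 1) * f x / √(x - a) =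
      2 * (M + 1) * a * (∫ x in 0..c, x ^ M * f x / √(x - a)) +
        2 * (√(c - a) * c ^ (M + 1) * f c - ∫ x in 0..c, x ^ (M + 1) * √(x - a) * deriv f x) := by
  have hsqrt : ContinuousOn (fun x => √(x - a)) (Icc 0 c) := by fun_prop
  have hsqrt0 : ∀ x ∈ Icc 0 c, √(x - a) ≠ 0 :=
    fun x hx => (Real.sqrt_pos.2 (by linarith [hx.1])).ne'
  have hI : ∀ k : ℕ, IntegrableOn (fun x => x ^ k * f x / √(x - a)) (Icc 0 c) := fun k =>
    (integrableOn_Icc_mul_of_integrableOn_Ioo hf (h := fun x => x ^ k / √(x - a))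
      ((continuousOn_pow k).div hsqrt hsqrt0)).congr_fun
      (fun x _ => by ring) measurableSet_Icc
  have hJ : IntegrableOn (fun x => x ^ (M + 1) * √(x - a) * deriv f x) (Icc 0 c) :=
    (integrableOn_Icc_mul_of_integrableOn_Ioo hf' (continuousOn_pow M)).congr_fun
      (fun x _ => by ring) measurableSet_Icc
  have hG : IntegrableOn (fun x => x ^ M * √(x - a) * f x) (Ioo 0 c) :=
    (integrableOn_Icc_mul_of_integrableOn_Ioo hf ((continuousOn_pow M).mul hsqrt)).mono_set
      Ioo_subset_Icc_self
  have hI₀ := tendsto_integral_lowerLimit_nhdsGT hc (hI M)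
  have hI₁ := tendsto_integral_lowerLimit_nhdsGT hc (hI (M + 1))
  have hJ₁ := tendsto_integral_lowerLimit_nhdsGT hc hJ
  have hlim := (((hI₀.const_mul (2 * (M + 1) * a)).add
    ((hJ₁.const_sub (√(c - a) * c ^ (M + 1) * f c)).const_mul 2)).sub
    (hI₁.const_mul (2 * M + 3 : ℝ))).div_const 2
  have hboundary := eq_zero_of_integrableOn_of_tendsto_mul hc hG (hlim.congr' ?_)
  · linarith
  filter_upwards [Ioo_mem_nhdsGT hc] with d hd
  have := integral_pow_mul_div_sqrt_recurrence_of_lt (a := a) (by linarith [hd.1]) hd.2.le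
    (fun x hx => hdiff x ⟨hd.1.trans_le hx.1, hx.2⟩)
    (hcont.mono fun x hx => ⟨hd.1.trans_le hx.1, hx.2⟩) M
  linarith

/-- Lemma 6.2 (Transform2): for `a < 0`, `f` continuously differentiable on
`(0,1)`, `ε ∈ (0,1)` with the stated integrability, and every `N ∈ ℕ`,
`∫_0^{1-ε} x^N f(x)/√(x-a) dx = ((4a)^N/((2N+1)·C(2N,N))) ·
  ( ∫_0^{1-ε} f(x)/√(x-a) dx
    + 2·Σ_{i=1}^N (C(2i,i)/(4a)^i)·( √(1-a-ε)·(1-ε)^i·f(1-ε)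
        - ∫_0^{1-ε} x^i √(x-a) f'(x) dx ) )`. -/
theorem stmt_14 (a : ℝ) (ha : a < 0) (f : ℝ → ℝ)
    (hdiff : ∀ t ∈ Set.Ioo (0 : ℝ) 1, DifferentiableAt ℝ f t)
    (hcont : ContinuousOn (deriv f) (Set.Ioo 0 1))
    (ε : ℝ) (hε0 : 0 < ε) (hε1 : ε < 1)
    (hint1 : MeasureTheory.IntegrableOn f (Set.Ioo 0 (1 - ε)))
    (hint2 : MeasureTheory.IntegrableOn
      (fun x => x * Real.sqrt (x - a) * deriv f x) (Set.Ioo 0 (1 - ε))) :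
    ∀ N : ℕ,
      (∫ x in (0 : ℝ)..(1 - ε), x ^ N * f x / Real.sqrt (x - a)) =
        ((4 * a) ^ N / ((2 * (N : ℝ) + 1) * (Nat.choose (2 * N) N : ℝ))) *
          ((∫ x in (0 : ℝ)..(1 - ε), f x / Real.sqrt (x - a)) +
            2 * ∑ i ∈ Finset.Icc 1 N,
              ((Nat.choose (2 * i) i : ℝ) / (4 * a) ^ i) *
                (Real.sqrt (1 - a - ε) * (1 - ε) ^ i * f (1 - ε) -
                  ∫ x in (0 : ℝ)..(1 - ε), x ^ i * Real.sqrt (x - a) * deriv f x)) := by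
  intro N
  have hsub : Ioc 0 (1 - ε) ⊆ Ioo 0 1 := fun x hx => ⟨hx.1, hx.2.trans_lt (by linarith)⟩
  have hrec := integral_pow_mul_div_sqrt_recurrence ha (by linarith)
    (fun x hx => hdiff x (hsub hx)) (hcont.mono hsub) hint1 hint2
  rw [show 1 - a - ε = 1 - ε - a by ring]
  simpa using eq_centralBinom_sum_of_recurrence ha.ne
    (I := fun k => ∫ x in (0 : ℝ)..(1 - ε), x ^ k * f x / √(x - a))
    (B := fun i => √(1 - ε - a) * (1 - ε) ^ i * f (1 - ε) -
      ∫ x in (0 : ℝ)..(1 - ε), x ^ i * √(x - a) * deriv f x) hrec N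
end

section
/- Let a < 0 and let f : (0,1) → ℝ be continuously differentiable. Fix ε ∈ (0,1) and assume that x ↦ f(x)/√x and x ↦ √x·√(x−a)·f′(x) are Lebesgue integrable on (0, 1−ε). Then for every natural number N: ∫_0^{1−ε} x^N·f(x)/√(x·(x−a)) dx = (a/4)^N·C(2N,N) · ( ∫_0^{1−ε} f(x)/√(x·(x−a)) dx + Σ_{i=1}^{N} ( (4/a)^i / (i·C(2i,i)) ) · ( √(1−a−ε)·(1−ε)^{i−1/2}·f(1−ε) − ∫_0^{1−ε} x^i·√((x−a)/x)·f′(x) dx ) ). -/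
/-!
With `F(x) = x^M √(x(x-a)) f(x)` one has
`F' = (M+1) x^(M+1) f/√(x(x-a)) - a(M+1/2) x^M f/√(x(x-a)) + x^M √(x(x-a)) f'`.
Integrating over `(0, 1-ε)` gives a two-term recurrence for the moments
`J_M = ∫ x^M f/√(x(x-a))`, once one knows that `F` has limit `0` at `0⁺`: the limit exists by the
fundamental theorem of calculus, and it must vanish since `F(x)/x = O(f(x)/√x)` is integrable.
The resulting recurrence `(M+1) J_{M+1} = a(M+1/2) J_M + t_{M+1}`, with `t_{M+1}` the boundary
value at `1-ε` minus the `f'`-integral, is solved in closed form using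
`(M+1) C(2M+2, M+1) = 2(2M+1) C(2M, M)`.
-/

open Set MeasureTheory Filter Topology

theorem tendsto_nhdsGT_of_hasDerivAt_of_intervalIntegrable {E : Type*} [NormedAddCommGroup E]
    [NormedSpace ℝ E] [CompleteSpace E] {F G : ℝ → E} {a b : ℝ} (hab : a < b)
    (hderiv : ∀ x ∈ Ioc a b, HasDerivAt F (G x) x) (hint : IntervalIntegrable G volume a b) :
    Tendsto F (𝓝[>] a) (𝓝 (F b - ∫ x in a..b, G x)) := by
  have hprim : ContinuousWithinAt (fun c => ∫ x in c..b, G x) (Icc a b) a := by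
    have := intervalIntegral.continuousOn_primitive_interval_left
      ((intervalIntegrable_iff').mp hint)
    rw [uIcc_of_le hab.le] at this
    exact this a (left_mem_Icc.mpr hab.le)
  have hF : ∀ c ∈ Ioo a b, F c = F b - ∫ x in c..b, G x := by
    intro c hc
    rw [intervalIntegral.integral_eq_sub_of_hasDerivAt, sub_sub_cancel]
    · intro x hx
      rw [uIcc_of_le hc.2.le] at hx
      exact hderiv x ⟨hc.1.trans_le hx.1, hx.2⟩
    · refine hint.mono_set ?_
      rw [uIcc_of_le hc.2.le, uIcc_of_le hab.le]
      exact Icc_subset_Icc hc.1.le le_rfl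
  rw [← nhdsWithin_Ioo_eq_nhdsGT hab]
  refine (tendsto_const_nhds.sub (hprim.mono Ioo_subset_Icc_self)).congr' ?_
  filter_upwards [self_mem_nhdsWithin] with c hc using (hF c hc).symm

theorem eq_zero_of_tendsto_nhdsGT_of_integrableOn_div {F : ℝ → ℝ} {c b L : ℝ} (hcb : c < b)
    (hF : Tendsto F (𝓝[>] c) (𝓝 L)) (hint : IntegrableOn (fun x => F x / (x - c)) (Ioo c b)) :
    L = 0 := by
  by_contra hL
  have hL' : 0 < |L| := abs_pos.mpr hL
  obtain ⟨d, hd, hdF⟩ := mem_nhdsGT_iff_exists_Ioo_subset.mp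
    ((hF.abs).eventually (eventually_gt_nhds (half_lt_self hL')))
  have hcd : c < min d b := lt_min hd hcb
  -- near `c` the integrand dominates a multiple of `(x - c)⁻¹`, which is not integrable there
  have hinv : IntegrableOn (fun x => (x - c)⁻¹) (Ioo c (min d b)) := by
    refine ((hint.mono_set (Ioo_subset_Ioo_right (min_le_right d b))).const_mul
      (2 / |L|)).mono (by fun_prop) ?_
    refine (ae_restrict_iff' measurableSet_Ioo).mpr (ae_of_all _ fun x hx => ?_)
    have hx : x ∈ Ioo c d := ⟨hx.1, hx.2.trans_le (min_le_left d b)⟩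
    have hFx : |L| / 2 < |F x| := hdF hx
    have hxc : 0 < x - c := sub_pos.mpr hx.1
    have hFx' : 1 ≤ 2 / |L| * |F x| := by
      rw [div_mul_eq_mul_div, le_div_iff₀ hL']
      linarith
    rw [Real.norm_eq_abs, Real.norm_eq_abs, abs_inv, abs_mul,
      abs_of_pos (by positivity : (0 : ℝ) < 2 / |L|), abs_div, abs_of_pos hxc]
    calc (x - c)⁻¹ = 1 * (x - c)⁻¹ := (one_mul _).symm
      _ ≤ 2 / |L| * |F x| * (x - c)⁻¹ := by gcongr
      _ = 2 / |L| * (|F x| / (x - c)) := by ring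
  rw [← intervalIntegrable_iff_integrableOn_Ioo_of_le hcd.le] at hinv
  simp [hcd.ne] at hinv

theorem eq_choose_mul_of_succ_mul_eq {a : ℝ} (ha : a ≠ 0) {J t : ℕ → ℝ}
    (h : ∀ M : ℕ, ((M : ℝ) + 1) * J (M + 1) = a * ((M : ℝ) + 1 / 2) * J M + t (M + 1))
    (N : ℕ) :
    J N = (a / 4) ^ N * (Nat.choose (2 * N) N : ℝ) *
      (J 0 + ∑ i ∈ Finset.Icc 1 N,
        ((4 / a) ^ i / ((i : ℝ) * (Nat.choose (2 * i) i : ℝ))) * t i) := by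
  induction N with
  | zero => simp
  | succ N ih =>
    set S := J 0 + ∑ i ∈ Finset.Icc 1 N,
        ((4 / a) ^ i / ((i : ℝ) * (Nat.choose (2 * i) i : ℝ))) * t i with hS
    have hC : ((N : ℝ) + 1) * (Nat.choose (2 * (N + 1)) (N + 1) : ℝ) =
        2 * (2 * N + 1) * (Nat.choose (2 * N) N : ℝ) := by
      exact_mod_cast Nat.succ_mul_centralBinom_succ N
    have hC0 : (Nat.choose (2 * (N + 1)) (N + 1) : ℝ) ≠ 0 := by
      exact_mod_cast (Nat.centralBinom_pos (N + 1)).ne'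
    have hpow : (a / 4) ^ (N + 1) * (4 / a) ^ (N + 1) = 1 := by
      rw [← mul_pow, div_mul_div_cancel₀' ha, div_self four_ne_zero, one_pow]
    have hN : ((N : ℝ) + 1) ≠ 0 := N.cast_add_one_ne_zero
    rw [Finset.sum_Icc_succ_top (by omega), ← add_assoc, ← hS, mul_add]
    apply mul_left_cancel₀ hN
    rw [h N, ih]
    field_simp
    push_cast
    linear_combination -2 * ((N : ℝ) + 1) * (a / 4) ^ (N + 1) * S * hC
      - 2 * ((N : ℝ) + 1) * t (N + 1) * hpow

theorem hasDerivAt_pow_mul_sqrt_mul_sub_mul {a x f' : ℝ} {f : ℝ → ℝ} (M : ℕ)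
    (hx : 0 < x * (x - a)) (hf : HasDerivAt f f' x) :
    HasDerivAt (fun y => y ^ M * √(y * (y - a)) * f y)
      ((M + 1) * (x ^ (M + 1) * f x / √(x * (x - a)))
        - a * (M + 1 / 2) * (x ^ M * f x / √(x * (x - a))) + x ^ M * √(x * (x - a)) * f') x := by
  have hpoly : HasDerivAt (fun y : ℝ => y * (y - a)) (2 * x - a) x := by
    refine ((hasDerivAt_id' x).fun_mul ((hasDerivAt_id' x).sub_const a)).congr_deriv ?_
    ring
  have hs : √(x * (x - a)) ≠ 0 := Real.sqrt_ne_zero'.mpr hx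
  refine (((hasDerivAt_pow M x).fun_mul (hpoly.sqrt hx.ne')).fun_mul hf).congr_deriv ?_
  rcases M with _ | M
  · field_simp
    rw [Real.sq_sqrt hx.le]
    ring
  · field_simp
    rw [Real.sq_sqrt hx.le]
    push_cast
    ring

section

variable {a b : ℝ} {f : ℝ → ℝ}

theorem integrableOn_pow_mul_div_sqrt_mul_sub (ha : a < 0)
    (hf : IntegrableOn (fun x => f x / √x) (Ioo 0 b)) (k : ℕ) :
    IntegrableOn (fun x => x ^ k * f x / √(x * (x - a))) (Ioo 0 b) := by
  have hcont : ContinuousOn (fun x : ℝ => x ^ k / √(x - a)) (Icc 0 b) :=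
    (continuousOn_pow k).div (by fun_prop) fun x hx =>
      Real.sqrt_ne_zero'.mpr (by linarith [hx.1])
  refine (hf.mul_continuousOn_of_subset hcont measurableSet_Ioo isCompact_Icc
    Ioo_subset_Icc_self).congr_fun (fun x hx => ?_) measurableSet_Ioo
  simp only
  rw [Real.sqrt_mul hx.1.le]
  ring

theorem integrableOn_pow_mul_sqrt_mul_sub_mul {g : ℝ → ℝ}
    (hg : IntegrableOn (fun x => √x * √(x - a) * g x) (Ioo 0 b)) (k : ℕ) :
    IntegrableOn (fun x => x ^ k * √(x * (x - a)) * g x) (Ioo 0 b) := by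
  refine (hg.mul_continuousOn_of_subset (continuousOn_pow k) measurableSet_Ioo isCompact_Icc
    Ioo_subset_Icc_self).congr_fun (fun x hx => ?_) measurableSet_Ioo
  simp only
  rw [Real.sqrt_mul hx.1.le]
  ring

theorem integrableOn_pow_mul_sqrt_mul_sub_mul_div_self
    (hf : IntegrableOn (fun x => f x / √x) (Ioo 0 b)) (M : ℕ) :
    IntegrableOn (fun x => x ^ M * √(x * (x - a)) * f x / x) (Ioo 0 b) := by
  refine (hf.mul_continuousOn_of_subset (g' := fun x => x ^ M * √(x - a)) (by fun_prop)
    measurableSet_Ioo isCompact_Icc Ioo_subset_Icc_self).congr_fun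
    (fun x hx => ?_) measurableSet_Ioo
  have hx0 : √x ≠ 0 := Real.sqrt_ne_zero'.mpr hx.1
  simp only
  rw [Real.sqrt_mul hx.1.le]
  field_simp
  rw [Real.sq_sqrt hx.1.le]
  field_simp [hx.1.ne']

theorem succ_mul_integral_pow_mul_div_sqrt_mul_sub (ha : a < 0) (hb : 0 < b)
    (hdiff : ∀ x ∈ Ioc 0 b, DifferentiableAt ℝ f x)
    (hf : IntegrableOn (fun x => f x / √x) (Ioo 0 b))
    (hf' : IntegrableOn (fun x => √x * √(x - a) * deriv f x) (Ioo 0 b)) (M : ℕ) :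
    ((M : ℝ) + 1) * (∫ x in 0..b, x ^ (M + 1) * f x / √(x * (x - a))) =
      a * ((M : ℝ) + 1 / 2) * (∫ x in 0..b, x ^ M * f x / √(x * (x - a)))
        + b ^ M * √(b * (b - a)) * f b - ∫ x in 0..b, x ^ M * √(x * (x - a)) * deriv f x := by
  have hii : ∀ {g : ℝ → ℝ}, IntegrableOn g (Ioo 0 b) → IntervalIntegrable g volume 0 b :=
    (intervalIntegrable_iff_integrableOn_Ioo_of_le hb.le).mpr
  have hA k := hii (integrableOn_pow_mul_div_sqrt_mul_sub ha hf k)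
  have hA' := ((hA (M + 1)).const_mul ((M : ℝ) + 1)).sub ((hA M).const_mul (a * ((M : ℝ) + 1 / 2)))
  have hB := hii (integrableOn_pow_mul_sqrt_mul_sub_mul hf' M)
  have hderiv : ∀ x ∈ Ioc 0 b, HasDerivAt (fun y => y ^ M * √(y * (y - a)) * f y)
      ((M + 1) * (x ^ (M + 1) * f x / √(x * (x - a)))
        - a * (M + 1 / 2) * (x ^ M * f x / √(x * (x - a)))
        + x ^ M * √(x * (x - a)) * deriv f x) x := fun x hx =>
    hasDerivAt_pow_mul_sqrt_mul_sub_mul M (mul_pos hx.1 (by linarith [hx.1]))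
      (hdiff x hx).hasDerivAt
  -- the boundary term at `0` vanishes because `f x / √x` is integrable there
  have hvanish := eq_zero_of_tendsto_nhdsGT_of_integrableOn_div hb
    (tendsto_nhdsGT_of_hasDerivAt_of_intervalIntegrable hb hderiv (hA'.add hB))
    (by simpa only [sub_zero] using integrableOn_pow_mul_sqrt_mul_sub_mul_div_self hf M)
  rw [intervalIntegral.integral_add hA' hB, intervalIntegral.integral_sub
    ((hA (M + 1)).const_mul _) ((hA M).const_mul _), intervalIntegral.integral_const_mul,
    intervalIntegral.integral_const_mul] at hvanish
  linarith

end

theorem pow_mul_sqrt_mul_sub_eq_sqrt_sub_mul_rpow {a b : ℝ} (hb : 0 < b) (M : ℕ) :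
    b ^ M * √(b * (b - a)) = √(b - a) * b ^ (((M + 1 : ℕ) : ℝ) - 1 / 2) := by
  have hexp : ((M + 1 : ℕ) : ℝ) - 1 / 2 = M + 1 / 2 := by push_cast; ring
  rw [hexp, Real.rpow_add hb, Real.rpow_natCast, ← Real.sqrt_eq_rpow, Real.sqrt_mul hb.le]
  ring

theorem pow_succ_mul_sqrt_sub_div_self {a x : ℝ} (hx : 0 ≤ x) (M : ℕ) :
    x ^ (M + 1) * √((x - a) / x) = x ^ M * √(x * (x - a)) := by
  rw [Real.sqrt_div' _ hx, Real.sqrt_mul hx, pow_succ, mul_assoc, mul_div_left_comm,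
    Real.div_sqrt]
  ring

theorem stmt_15_general (a : ℝ) (ha : a < 0) (f : ℝ → ℝ)
    (hdiff : ∀ t ∈ Set.Ioo (0 : ℝ) 1, DifferentiableAt ℝ f t)
    (ε : ℝ) (hε0 : 0 < ε) (hε1 : ε < 1)
    (hint1 : MeasureTheory.IntegrableOn
      (fun x => f x / Real.sqrt x) (Set.Ioo 0 (1 - ε)))
    (hint2 : MeasureTheory.IntegrableOn
      (fun x => Real.sqrt x * Real.sqrt (x - a) * deriv f x) (Set.Ioo 0 (1 - ε))) :
    ∀ N : ℕ,
      (∫ x in (0 : ℝ)..(1 - ε), x ^ N * f x / Real.sqrt (x * (x - a))) =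
        (a / 4) ^ N * (Nat.choose (2 * N) N : ℝ) *
          ((∫ x in (0 : ℝ)..(1 - ε), f x / Real.sqrt (x * (x - a))) +
            ∑ i ∈ Finset.Icc 1 N,
              ((4 / a) ^ i / ((i : ℝ) * (Nat.choose (2 * i) i : ℝ))) *
                (Real.sqrt (1 - a - ε) * (1 - ε) ^ ((i : ℝ) - 1 / 2) * f (1 - ε) -
                  ∫ x in (0 : ℝ)..(1 - ε),
                    x ^ i * Real.sqrt ((x - a) / x) * deriv f x)) := by
  intro N
  have hε : 1 - a - ε = 1 - ε - a := by ring
  have hb : 0 < 1 - ε := by linarith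
  have hdiff' : ∀ x ∈ Ioc 0 (1 - ε), DifferentiableAt ℝ f x := fun x hx =>
    hdiff x ⟨hx.1, by linarith [hx.2]⟩
  have hK (M : ℕ) : ∫ x in (0 : ℝ)..(1 - ε), x ^ (M + 1) * √((x - a) / x) * deriv f x =
      ∫ x in (0 : ℝ)..(1 - ε), x ^ M * √(x * (x - a)) * deriv f x :=
    intervalIntegral.integral_congr fun x hx => by
      rw [uIcc_of_le hb.le] at hx
      simp only [pow_succ_mul_sqrt_sub_div_self hx.1]
  simpa only [pow_zero, one_mul] using eq_choose_mul_of_succ_mul_eq ha.ne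
    (J := fun n => ∫ x in (0 : ℝ)..(1 - ε), x ^ n * f x / √(x * (x - a)))
    (t := fun i => √(1 - a - ε) * (1 - ε) ^ ((i : ℝ) - 1 / 2) * f (1 - ε) -
      ∫ x in (0 : ℝ)..(1 - ε), x ^ i * √((x - a) / x) * deriv f x) (fun M => by
      rw [succ_mul_integral_pow_mul_div_sqrt_mul_sub ha hb hdiff' hint1 hint2 M,
        pow_mul_sqrt_mul_sub_eq_sqrt_sub_mul_rpow hb, hε, hK]
      ring) N

/-- Lemma 6.3 (Transform3): for `a < 0`, `f` continuously differentiable on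
`(0,1)`, `ε ∈ (0,1)` with the stated integrability, and every `N ∈ ℕ`,
`∫_0^{1-ε} x^N f(x)/√(x(x-a)) dx = (a/4)^N·C(2N,N) ·
  ( ∫_0^{1-ε} f(x)/√(x(x-a)) dx
    + Σ_{i=1}^N ((4/a)^i/(i·C(2i,i)))·( √(1-a-ε)·(1-ε)^{i-1/2}·f(1-ε)
        - ∫_0^{1-ε} x^i·√((x-a)/x)·f'(x) dx ) )`. -/
theorem stmt_15 (a : ℝ) (ha : a < 0) (f : ℝ → ℝ)
    (hdiff : ∀ t ∈ Set.Ioo (0 : ℝ) 1, DifferentiableAt ℝ f t)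
    (hcont : ContinuousOn (deriv f) (Set.Ioo 0 1))
    (ε : ℝ) (hε0 : 0 < ε) (hε1 : ε < 1)
    (hint1 : MeasureTheory.IntegrableOn
      (fun x => f x / Real.sqrt x) (Set.Ioo 0 (1 - ε)))
    (hint2 : MeasureTheory.IntegrableOn
      (fun x => Real.sqrt x * Real.sqrt (x - a) * deriv f x) (Set.Ioo 0 (1 - ε))) :
    ∀ N : ℕ,
      (∫ x in (0 : ℝ)..(1 - ε), x ^ N * f x / Real.sqrt (x * (x - a))) =
        (a / 4) ^ N * (Nat.choose (2 * N) N : ℝ) *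
          ((∫ x in (0 : ℝ)..(1 - ε), f x / Real.sqrt (x * (x - a))) +
            ∑ i ∈ Finset.Icc 1 N,
              ((4 / a) ^ i / ((i : ℝ) * (Nat.choose (2 * i) i : ℝ))) *
                (Real.sqrt (1 - a - ε) * (1 - ε) ^ ((i : ℝ) - 1 / 2) * f (1 - ε) -
                  ∫ x in (0 : ℝ)..(1 - ε),
                    x ^ i * Real.sqrt ((x - a) / x) * deriv f x)) :=
  stmt_15_general a ha f hdiff ε hε0 hε1 hint1 hint2
end
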